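/- arXiv:1912.08551 — 4 statements merged into one kernel-verified Lean document; each statement's English description precedes it below -/
import Mathlib

section
/- For any σ ∈ S_n and 1 ≤ k ≤ n, the generating function for width-k left enriched order polynomials is Σ_{p ≥ 0} Ω^{(ℓ)}(σ, k, p) x^p = 2^{k-1} · (1+x)^{n-k+1} / (1-x)^{n-k+2} · (4x/(1+x)²)^{lpeak_k(σ)}. -/
open Finset

/-- The value function of the signed permutation determined by `σ` and sign vector `ε`:
`bval n σ ε i` is `π(i)` for `i ∈ {-n,…,n}`, with `π(0) = 0` and `π(-i) = -π(i)`. -/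
def bval (n : ℕ) (σ : Equiv.Perm (Fin n)) (ε : Fin n → Bool) : ℤ → ℤ := fun i =>
  if h : 1 ≤ i.natAbs ∧ i.natAbs ≤ n then
    (Int.sign i) *
      (if ε ⟨i.natAbs - 1, by omega⟩ then -((((σ ⟨i.natAbs - 1, by omega⟩ : Fin n) : ℕ) : ℤ) + 1)
       else (((σ ⟨i.natAbs - 1, by omega⟩ : Fin n) : ℕ) : ℤ) + 1)
  else 0

/-- width-`k` type-B descent number: `#{0 ≤ i ≤ n-k : π(i) > π(i+k)}`, `π(0)=0`. -/
def desB (n k : ℕ) (π : ℤ → ℤ) : ℕ :=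
  ((range (n - k + 1)).filter fun i : ℕ => π i > π ((i : ℤ) + k)).card

/-- width-`k` type-A descent number: `#{1 ≤ i ≤ n-k : π(i) > π(i+k)}`. -/
def desA (n k : ℕ) (π : ℤ → ℤ) : ℕ :=
  ((Icc 1 (n - k)).filter fun i : ℕ => π i > π ((i : ℤ) + k)).card

/-- width-`k` negative descent number: `#{1 ≤ i ≤ n-k : π(-i) > π(i+k)}`. -/
def ndesB (n k : ℕ) (π : ℤ → ℤ) : ℕ :=
  ((Icc 1 (n - k)).filter fun i : ℕ => π (-(i : ℤ)) > π ((i : ℤ) + k)).card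

/-- width-`k` inversion number: pairs `i < j` in `[n]` with `j - i` a positive multiple of `k`
and `π(i) > π(j)`. -/
def invAk (n k : ℕ) (π : ℤ → ℤ) : ℕ :=
  (((Icc 1 n) ×ˢ (Icc 1 n)).filter fun p : ℕ × ℕ =>
    p.1 < p.2 ∧ k ∣ (p.2 - p.1) ∧ π p.1 > π p.2).card

/-- width-`k` negative-entry statistic: `#{1 ≤ i ≤ ⌊n/k⌋ : π(ik) < 0}`. -/
def negk (n k : ℕ) (π : ℤ → ℤ) : ℕ :=
  ((Icc 1 (n / k)).filter fun i : ℕ => π ((i : ℤ) * k) < 0).card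

/-- width-`k` negative-sum-pair statistic. -/
def nspk (n k : ℕ) (π : ℤ → ℤ) : ℕ :=
  (((Icc 1 n) ×ˢ (Icc 1 n)).filter fun p : ℕ × ℕ =>
    p.1 < p.2 ∧ k ∣ (p.2 - p.1) ∧ π p.1 + π p.2 < 0).card

/-- width-`k` type-B inversion number. -/
def invBk (n k : ℕ) (π : ℤ → ℤ) : ℕ := invAk n k π + negk n k π + nspk n k π

/-- Number of width-`k` left peaks: indices `k ≤ i ≤ n-k` with `π(i-k) < π(i) > π(i+k)`,
convention `π(0) = 0`. -/
def lpeakk (n k : ℕ) (π : ℤ → ℤ) : ℕ :=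
  ((Finset.Icc k (n - k)).filter fun i : ℕ =>
    π ((i : ℤ) - k) < π i ∧ π i > π ((i : ℤ) + k)).card

/-- The set `Lpeak_k(σ)` of width-`k` left peaks. -/
def LpeakSet (n k : ℕ) (π : ℤ → ℤ) : Finset ℕ :=
  (Finset.Icc k (n - k)).filter fun i : ℕ =>
    π ((i : ℤ) - k) < π i ∧ π i > π ((i : ℤ) + k)

/-- The width-`k` type-B order polynomial `Ω_B(D,k,p)` attached to a descent set
`D ⊆ {0,…,n-k}`: chains `0 ≤ g_1 ≤ … ≤ g_{n-k+1} ≤ p` strict at each `s ∈ D`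
(with `0 < g_1` when `0 ∈ D`). -/
def OmegaBD (n k p : ℕ) (D : Finset ℕ) : ℕ :=
  Fintype.card {g : Fin (n - k + 1) → Fin (p + 1) //
    (∀ a b : Fin (n - k + 1), a ≤ b → g a ≤ g b) ∧
    ∀ s : Fin (n - k + 1), (s : ℕ) ∈ D →
      (((s : ℕ) = 0 → (0 : ℕ) < g s) ∧
       (0 < (s : ℕ) →
         (g ⟨(s : ℕ) - 1, lt_of_le_of_lt (Nat.sub_le _ _) s.isLt⟩ : ℕ) < (g s : ℕ)))}

/-- The width-`k` left enriched order polynomial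
`Ω^{(ℓ)}(σ,k,p) = 2^{lpeak_k(σ)+k-1} Σ_{D ⊆ {0,…,n-k}, Lpeak_k(σ) ⊆ D Δ (D+k)} Ω_B(D,k,p)`. -/
def OmegaL (n k p : ℕ) (π : ℤ → ℤ) : ℕ :=
  2 ^ ((LpeakSet n k π).card + k - 1) *
    ∑ D ∈ (Finset.range (n - k + 1)).powerset.filter
        (fun D => LpeakSet n k π ⊆ symmDiff D (D.image (· + k))),
      OmegaBD n k p D


private lemma chain_lt {P : ℕ → ℕ} {m : ℕ} (h : ∀ j, j + 1 ≤ m → P j < P (j + 1)) :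
    ∀ a b, b ≤ m → a < b → P a < P b := by
  intro a b
  induction b with
  | zero => omega
  | succ t ih =>
    intro hb hab
    rcases Nat.lt_or_ge a t with h' | h'
    · exact lt_trans (ih (by omega) h') (h t hb)
    · have : a = t := by omega
      subst this
      exact h a hb

private lemma chain_le {P : ℕ → ℕ} {m : ℕ} (h : ∀ j, j + 1 ≤ m → P j ≤ P (j + 1)) :
    ∀ a b, b ≤ m → a ≤ b → P a ≤ P b := by
  intro a b
  induction b with
  | zero =>
    intro _ hab
    have ha : a = 0 := Nat.le_zero.mp hab
    rw [ha]
  | succ t ih =>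
    intro hb hab
    rcases Nat.lt_or_ge a (t + 1) with h' | h'
    · exact le_trans (ih (by omega) (by omega)) (h t hb)
    · have : a = t + 1 := by omega
      subst this; exact le_refl _

private lemma chain_ge {P : ℕ → ℕ} {m : ℕ} (h : ∀ j, j + 1 ≤ m → P j < P (j + 1)) :
    ∀ j, j ≤ m → j ≤ P j := by
  intro j
  induction j with
  | zero => omega
  | succ t ih => intro hj; have h1 := ih (by omega); have h2 := h t hj; omega

/-- `uf D j = j + 1 - #{s ∈ D : s ≤ j}`. -/
def uf (D : Finset ℕ) (j : ℕ) : ℕ := j + 1 - (D.filter (· ≤ j)).card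

lemma dcard_le (D : Finset ℕ) (j : ℕ) : (D.filter (· ≤ j)).card ≤ j + 1 := by
  calc (D.filter (· ≤ j)).card ≤ (range (j + 1)).card :=
        card_le_card (fun s hs => by
          simp only [mem_filter] at hs; exact mem_range.2 (by omega))
    _ = j + 1 := card_range _

lemma dcard_succ (D : Finset ℕ) (j : ℕ) :
    (D.filter (· ≤ j + 1)).card = (D.filter (· ≤ j)).card + (if j + 1 ∈ D then 1 else 0) := by
  have h1 : D.filter (· ≤ j + 1) = D.filter (· ≤ j) ∪ D.filter (· = j + 1) := by
    rw [← filter_or]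
    exact filter_congr (fun x _ => by constructor <;> (intro h; omega))
  rw [h1, card_union_of_disjoint, filter_eq']
  · split <;> simp
  · rw [disjoint_left]
    intro a ha hb
    simp only [mem_filter] at ha hb
    omega

lemma dcard_zero (D : Finset ℕ) : (D.filter (· ≤ 0)).card = if 0 ∈ D then 1 else 0 := by
  have h1 : D.filter (· ≤ 0) = D.filter (· = 0) :=
    filter_congr (fun x _ => by constructor <;> (intro h; omega))
  rw [h1, filter_eq']
  split <;> simp

lemma dcard_top {M : ℕ} {D : Finset ℕ} (hD : D ⊆ range (M + 1)) :
    (D.filter (· ≤ M)).card = D.card := by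
  rw [filter_true_of_mem]
  intro x hx
  have := mem_range.1 (hD hx)
  omega

lemma card_le_of_subset_range {M : ℕ} {D : Finset ℕ} (hD : D ⊆ range (M + 1)) :
    D.card ≤ M + 1 := by
  have := card_le_card hD
  simpa using this

lemma master_g (M p : ℕ) (D : Finset ℕ) (hD : D ⊆ range (M + 1))
    (g : Fin (M + 1) → Fin (p + 1))
    (h1 : ∀ a b : Fin (M + 1), a ≤ b → g a ≤ g b)
    (h2 : ∀ s : Fin (M + 1), (s : ℕ) ∈ D →
      (((s : ℕ) = 0 → (0 : ℕ) < g s) ∧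
       (0 < (s : ℕ) →
         (g ⟨(s : ℕ) - 1, lt_of_le_of_lt (Nat.sub_le _ _) s.isLt⟩ : ℕ) < (g s : ℕ)))) :
    (∀ j : Fin (M + 1), 1 ≤ (g j : ℕ) + uf D j ∧ (g j : ℕ) + uf D j ≤ p + (M + 1) - D.card) ∧
      StrictMono fun j : Fin (M + 1) => ((g j : ℕ) + uf D j - 1) := by
  have hcle := card_le_of_subset_range hD
  set hseq : ℕ → ℕ := fun j => (g ⟨min j M, by omega⟩ : ℕ) + uf D (min j M) with hseq_def
  have hseq_eq : ∀ j : Fin (M + 1), hseq (j : ℕ) = (g j : ℕ) + uf D (j : ℕ) := by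
    intro j
    have hj : min (j : ℕ) M = (j : ℕ) := min_eq_left (by omega)
    simp only [hseq_def, hj, Fin.eta]
  have hstep : ∀ j, j + 1 ≤ M → hseq j < hseq (j + 1) := by
    intro j hj
    have e1 : min j M = j := min_eq_left (by omega)
    have e2 : min (j + 1) M = j + 1 := min_eq_left (by omega)
    have hdle := dcard_le D j
    have hds := dcard_succ D j
    simp only [hseq_def, e1, e2]
    by_cases hmem : j + 1 ∈ D
    · have hlt := (h2 ⟨j + 1, by omega⟩ (by simpa using hmem)).2 (by simp)
      have hu : uf D (j + 1) = uf D j := by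
        simp only [uf, hds, hmem, if_true]
        omega
      rw [hu]
      simp only [show j + 1 - 1 = j from rfl] at hlt
      omega
    · have hle := h1 ⟨j, by omega⟩ ⟨j + 1, by omega⟩ (by simp [Fin.le_def])
      rw [Fin.le_def] at hle
      have hu : uf D (j + 1) = uf D j + 1 := by
        simp only [uf, hds, hmem, if_false]
        omega
      rw [hu]
      omega
  have hbase : 1 ≤ hseq 0 := by
    have e1 : min 0 M = 0 := by omega
    simp only [hseq_def, e1]
    by_cases hmem : 0 ∈ D
    · have := (h2 ⟨0, by omega⟩ (by simpa using hmem)).1 (by simp)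
      omega
    · have hu : uf D 0 = 1 := by
        unfold uf
        rw [dcard_zero, if_neg hmem]
      omega
  have htop : hseq M ≤ p + (M + 1) - D.card := by
    have e1 : min M M = M := min_self M
    simp only [hseq_def, e1]
    have h3 : uf D M = M + 1 - D.card := by simp [uf, dcard_top hD]
    have h4 : (g ⟨M, by omega⟩ : ℕ) ≤ p := by have := (g ⟨M, by omega⟩).isLt; omega
    omega
  have hmono' : ∀ a b, b ≤ M → a ≤ b → hseq a ≤ hseq b :=
    chain_le (fun j hj => le_of_lt (hstep j hj))
  have hbnd : ∀ j : Fin (M + 1), 1 ≤ (g j : ℕ) + uf D j ∧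
      (g j : ℕ) + uf D j ≤ p + (M + 1) - D.card := by
    intro j
    have hj : (j : ℕ) ≤ M := by omega
    have b1 : hseq 0 ≤ hseq (j : ℕ) := hmono' 0 (j : ℕ) hj (Nat.zero_le _)
    have b2 : hseq (j : ℕ) ≤ hseq M := hmono' (j : ℕ) M le_rfl hj
    rw [hseq_eq] at b1 b2
    omega
  refine ⟨hbnd, ?_⟩
  intro a b hab
  rw [Fin.lt_def] at hab
  have hlt := chain_lt hstep (a : ℕ) (b : ℕ) (by omega) hab
  rw [hseq_eq, hseq_eq] at hlt
  have h1a := hbnd a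
  simp only []
  omega

lemma master_f (M p : ℕ) (D : Finset ℕ) (hD : D ⊆ range (M + 1))
    (f : Fin (M + 1) → Fin (p + (M + 1) - D.card)) (hf : StrictMono f) :
    (∀ j : Fin (M + 1), uf D (j : ℕ) ≤ (f j : ℕ) + 1 ∧ (f j : ℕ) + 1 - uf D (j : ℕ) ≤ p) ∧
    (∀ a b : Fin (M + 1), a ≤ b →
      (f a : ℕ) + 1 - uf D (a : ℕ) ≤ (f b : ℕ) + 1 - uf D (b : ℕ)) ∧
    (∀ s : Fin (M + 1), (s : ℕ) ∈ D →
      (((s : ℕ) = 0 → 0 < (f s : ℕ) + 1 - uf D (s : ℕ)) ∧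
       (0 < (s : ℕ) →
         (f ⟨(s : ℕ) - 1, lt_of_le_of_lt (Nat.sub_le _ _) s.isLt⟩ : ℕ) + 1
            - uf D ((s : ℕ) - 1) < (f s : ℕ) + 1 - uf D (s : ℕ)))) := by
  have hcle := card_le_of_subset_range hD
  set fseq : ℕ → ℕ := fun j => (f ⟨min j M, by omega⟩ : ℕ) with fseq_def
  have fseq_eq : ∀ j : Fin (M + 1), fseq (j : ℕ) = (f j : ℕ) := by
    intro j
    have hj : min (j : ℕ) M = (j : ℕ) := min_eq_left (by omega)
    simp only [fseq_def, hj, Fin.eta]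
  have fstep : ∀ j, j + 1 ≤ M → fseq j < fseq (j + 1) := by
    intro j hj
    have e1 : min j M = j := min_eq_left (by omega)
    have e2 : min (j + 1) M = j + 1 := min_eq_left (by omega)
    simp only [fseq_def, e1, e2]
    exact hf (by simp [Fin.lt_def])
  have hge : ∀ j, j ≤ M → j ≤ fseq j := chain_ge fstep
  have hufle : ∀ j : ℕ, uf D j ≤ j + 1 := fun j => Nat.sub_le _ _
  have hgeF : ∀ j : Fin (M + 1), uf D (j : ℕ) ≤ (f j : ℕ) + 1 := by
    intro j
    have := hge (j : ℕ) (by omega)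
    rw [fseq_eq] at this
    have := hufle (j : ℕ)
    omega
  set vseq : ℕ → ℕ := fun j => fseq j + 1 - uf D (min j M) with vseq_def
  have vseq_eq : ∀ j : Fin (M + 1), vseq (j : ℕ) = (f j : ℕ) + 1 - uf D (j : ℕ) := by
    intro j
    have hj : min (j : ℕ) M = (j : ℕ) := min_eq_left (by omega)
    simp only [vseq_def, hj, fseq_eq]
  have vstep : ∀ j, j + 1 ≤ M → vseq j ≤ vseq (j + 1) := by
    intro j hj
    have e1 : min j M = j := min_eq_left (by omega)
    have e2 : min (j + 1) M = j + 1 := min_eq_left (by omega)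
    have hds := dcard_succ D j
    have hdle := dcard_le D j
    have hf1 := fstep j hj
    have hge1 := hge j (by omega)
    have hu1 := hufle j
    simp only [vseq_def, e1, e2, uf] at *
    split_ifs at hds <;> omega
  have vmono : ∀ a b, b ≤ M → a ≤ b → vseq a ≤ vseq b := chain_le vstep
  have vtop : vseq M ≤ p := by
    have e1 : min M M = M := min_self M
    have h3 : uf D M = M + 1 - D.card := by simp [uf, dcard_top hD]
    have h4 := (f ⟨M, by omega⟩).isLt
    simp only [vseq_def, fseq_def, e1, h3]
    omega
  have hbnd : ∀ j : Fin (M + 1), uf D (j : ℕ) ≤ (f j : ℕ) + 1 ∧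
      (f j : ℕ) + 1 - uf D (j : ℕ) ≤ p := by
    intro j
    refine ⟨hgeF j, ?_⟩
    have := vmono (j : ℕ) M le_rfl (by omega)
    rw [vseq_eq] at this
    omega
  refine ⟨hbnd, ?_, ?_⟩
  · intro a b hab
    rw [Fin.le_def] at hab
    have := vmono (a : ℕ) (b : ℕ) (by omega) hab
    rw [vseq_eq, vseq_eq] at this
    exact this
  · intro s hs
    constructor
    · intro h0
      have hu : uf D (s : ℕ) = 0 := by
        rw [h0]
        simp only [uf, dcard_zero]
        rw [if_pos (h0 ▸ hs)]
      rw [hu]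
      omega
    · intro hpos
      have key : ∀ a b : Fin (M + 1), (a : ℕ) + 1 = (b : ℕ) → (b : ℕ) ∈ D →
          (f a : ℕ) + 1 - uf D (a : ℕ) < (f b : ℕ) + 1 - uf D (b : ℕ) := by
        intro a b hab hbD
        have hfs := hf (show a < b by rw [Fin.lt_def]; omega)
        rw [Fin.lt_def] at hfs
        have hget : (a : ℕ) ≤ (f a : ℕ) := by
          have h5 := hge (a : ℕ) (by omega)
          rw [fseq_eq] at h5
          exact h5
        have hbD' : (a : ℕ) + 1 ∈ D := by rw [hab]; exact hbD
        have hds := dcard_succ D (a : ℕ)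
        rw [if_pos hbD'] at hds
        have hdle := dcard_le D (a : ℕ)
        have hue : uf D (b : ℕ) = uf D (a : ℕ) := by
          simp only [uf, ← hab, hds]
          omega
        rw [hue]
        have hua : uf D (a : ℕ) ≤ (f a : ℕ) + 1 := le_trans (Nat.sub_le _ _) (by omega)
        omega
      exact key ⟨(s : ℕ) - 1, lt_of_le_of_lt (Nat.sub_le _ _) s.isLt⟩ s (by simp; omega) hs

lemma card_strictMono_maps (m N : ℕ) :
    Fintype.card {f : Fin m → Fin N // StrictMono f} = N.choose m := by
  have e : {f : Fin m → Fin N // StrictMono f} ≃ {s : Finset (Fin N) // s.card = m} := by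
    refine
      { toFun := fun f => ⟨Finset.univ.image f.1, by
          rw [Finset.card_image_of_injective _ f.2.injective, Finset.card_univ,
            Fintype.card_fin]⟩
        invFun := fun s => ⟨s.1.orderEmbOfFin s.2, (s.1.orderEmbOfFin s.2).strictMono⟩
        left_inv := ?_
        right_inv := ?_ }
    · rintro ⟨f, hf⟩
      refine Subtype.ext (funext fun j => ?_)
      exact congrFun (Finset.orderEmbOfFin_unique _
        (fun x => Finset.mem_image_of_mem _ (Finset.mem_univ x)) hf).symm j
    · rintro ⟨s, hs⟩
      refine Subtype.ext ?_
      apply Finset.coe_injective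
      rw [Finset.coe_image, Finset.coe_univ, Set.image_univ]
      exact Finset.range_orderEmbOfFin s hs
  rw [Fintype.card_congr e, Fintype.card_finset_len, Fintype.card_fin]

lemma omega_card (M p : ℕ) (D : Finset ℕ) (hD : D ⊆ range (M + 1)) :
    Fintype.card {g : Fin (M + 1) → Fin (p + 1) //
      (∀ a b : Fin (M + 1), a ≤ b → g a ≤ g b) ∧
      ∀ s : Fin (M + 1), (s : ℕ) ∈ D →
        (((s : ℕ) = 0 → (0 : ℕ) < g s) ∧
         (0 < (s : ℕ) →
           (g ⟨(s : ℕ) - 1, lt_of_le_of_lt (Nat.sub_le _ _) s.isLt⟩ : ℕ) < (g s : ℕ)))} =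
    (p + (M + 1) - D.card).choose (M + 1) := by
  rw [← card_strictMono_maps (M + 1) (p + (M + 1) - D.card)]
  refine Fintype.card_congr ?_
  exact
    { toFun := fun gp =>
        ⟨fun j => ⟨(gp.1 j : ℕ) + uf D (j : ℕ) - 1, by
            have h := (master_g M p D hD gp.1 gp.2.1 gp.2.2).1 j
            omega⟩, by
          intro a b hab
          have hs := (master_g M p D hD gp.1 gp.2.1 gp.2.2).2 hab
          simp only [] at hs ⊢
          rw [Fin.lt_def]
          exact hs⟩
      invFun := fun fp =>
        ⟨fun j => ⟨(fp.1 j : ℕ) + 1 - uf D (j : ℕ), by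
            have h := (master_f M p D hD fp.1 fp.2).1 j
            omega⟩, by
          refine ⟨?_, ?_⟩
          · intro a b hab
            rw [Fin.le_def]
            exact (master_f M p D hD fp.1 fp.2).2.1 a b hab
          · intro s hs
            refine ⟨fun h0 => ?_, fun hpos => ?_⟩
            · exact ((master_f M p D hD fp.1 fp.2).2.2 s hs).1 h0
            · exact ((master_f M p D hD fp.1 fp.2).2.2 s hs).2 hpos⟩
      left_inv := fun gp => by
        refine Subtype.ext (funext fun j => Fin.ext ?_)
        have h := (master_g M p D hD gp.1 gp.2.1 gp.2.2).1 j
        simp only []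
        omega
      right_inv := fun fp => by
        refine Subtype.ext (funext fun j => Fin.ext ?_)
        have h := (master_f M p D hD fp.1 fp.2).1 j
        simp only []
        omega }

lemma gf_choose (m' c : ℕ) (hc : c ≤ m') :
    (PowerSeries.mk fun p => ((p + m' - c).choose m' : ℤ)) * (1 - PowerSeries.X) ^ (m' + 1)
      = PowerSeries.X ^ c := by
  have base : (PowerSeries.mk fun q => (Nat.choose (m' + q) m' : ℤ)) *
      (1 - PowerSeries.X) ^ (m' + 1) = 1 :=
    PowerSeries.mk_add_choose_mul_one_sub_pow_eq_one ℤ m'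
  have shift : (PowerSeries.mk fun p => ((p + m' - c).choose m' : ℤ)) =
      PowerSeries.X ^ c * PowerSeries.mk fun q => (Nat.choose (m' + q) m' : ℤ) := by
    ext p
    rw [PowerSeries.coeff_X_pow_mul', PowerSeries.coeff_mk]
    split_ifs with h
    · rw [PowerSeries.coeff_mk]
      congr 2
      omega
    · have : p + m' - c < m' := by omega
      rw [Nat.choose_eq_zero_of_lt this, Nat.cast_zero]
  rw [shift, mul_assoc, base, mul_one]

lemma subset_sum (k : ℕ) (hk : 1 ≤ k) (P A : Finset ℕ)
    (hPA : ∀ i ∈ P, i ∈ A ∧ i - k ∈ A ∧ k ≤ i)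
    (hadj : ∀ i ∈ P, i + k ∉ P) :
    2 * P.card ≤ A.card ∧
      ∑ D ∈ A.powerset.filter (fun D => ∀ t ∈ P, (t ∈ D ↔ ¬ t - k ∈ D)),
          (PowerSeries.X : PowerSeries ℤ) ^ D.card =
        (2 * PowerSeries.X) ^ P.card *
          (1 + PowerSeries.X) ^ (A.card - 2 * P.card) := by
  induction P using Finset.induction generalizing A with
  | empty =>
    refine ⟨by simp, ?_⟩
    rw [filter_true_of_mem (by simp)]
    simp only [card_empty, mul_zero, Nat.sub_zero, pow_zero, one_mul]
    have h := Finset.prod_add (fun _ : ℕ => (PowerSeries.X : PowerSeries ℤ))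
      (fun _ => (1 : PowerSeries ℤ)) A
    rw [prod_const] at h
    rw [add_comm (1 : PowerSeries ℤ) PowerSeries.X, h]
    refine Finset.sum_congr rfl fun D hD => ?_
    rw [prod_const, prod_const, one_pow, mul_one]
  | @insert i P' hiP' ih =>
    obtain ⟨hiA, hikA, hki⟩ := hPA i (mem_insert_self i P')
    have hne : i - k ≠ i := by omega
    set A' := (A.erase i).erase (i - k) with hA'
    have hiA' : i ∉ A' := by simp [hA', hne.symm]
    have hikA' : i - k ∉ A' := by simp [hA']
    have hA'sub : A' ⊆ A := (erase_subset _ _).trans (erase_subset _ _)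
    have hikAe : i - k ∈ A.erase i := mem_erase.2 ⟨hne, hikA⟩
    have hcardA' : A'.card = A.card - 2 := by
      rw [hA', card_erase_of_mem hikAe, card_erase_of_mem hiA]
      omega
    have hcardA : 2 ≤ A.card := by
      have hsub : {i - k, i} ⊆ A := by
        intro x hx
        rcases mem_insert.1 hx with rfl | hx
        · exact hikA
        · rw [mem_singleton.1 hx]; exact hiA
      have h2 : ({i - k, i} : Finset ℕ).card = 2 := by
        rw [card_insert_of_notMem (by simp [hne]), card_singleton]
      calc 2 = ({i - k, i} : Finset ℕ).card := h2.symm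
        _ ≤ A.card := card_le_card hsub
    have hsep : ∀ j ∈ P', j ≠ i ∧ j ≠ i - k ∧ j - k ≠ i ∧ j - k ≠ i - k := by
      intro j hj
      have hjP : j ∈ insert i P' := mem_insert_of_mem hj
      have hkj := (hPA j hjP).2.2
      refine ⟨fun h => hiP' (h ▸ hj), fun h => ?_, fun h => ?_, fun h => ?_⟩
      · apply hadj j hjP
        have : j + k = i := by omega
        rw [this]; exact mem_insert_self _ _
      · apply hadj i (mem_insert_self _ _)
        have : i + k = j := by omega
        rw [this]; exact mem_insert_of_mem hj
      · have : j = i := by omega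
        exact hiP' (this ▸ hj)
    have hPA' : ∀ j ∈ P', j ∈ A' ∧ j - k ∈ A' ∧ k ≤ j := by
      intro j hj
      obtain ⟨h1, h2, h3, h4⟩ := hsep j hj
      obtain ⟨hjA, hjkA, hkj⟩ := hPA j (mem_insert_of_mem hj)
      exact ⟨by simp [hA', mem_erase, h1, h2, hjA],
        by simp [hA', mem_erase, h3, h4, hjkA], hkj⟩
    have hadj' : ∀ j ∈ P', j + k ∉ P' := fun j hj h =>
      hadj j (mem_insert_of_mem hj) (mem_insert_of_mem h)
    obtain ⟨ihc, ihs⟩ := ih A' hPA' hadj'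
    have hQ : A.powerset.filter (fun D => ∀ t ∈ insert i P', (t ∈ D ↔ ¬ t - k ∈ D)) =
        ((A'.powerset.filter (fun D => ∀ t ∈ P', (t ∈ D ↔ ¬ t - k ∈ D))).image (insert i)) ∪
        ((A'.powerset.filter (fun D => ∀ t ∈ P', (t ∈ D ↔ ¬ t - k ∈ D))).image
          (insert (i - k))) := by
      ext D
      simp only [mem_filter, mem_powerset, mem_union, mem_image]
      constructor
      · rintro ⟨hDA, hcond⟩
        have hcondi := hcond i (mem_insert_self _ _)
        by_cases hiD : i ∈ D
        · left
          have hikD : i - k ∉ D := hcondi.mp hiD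
          refine ⟨D.erase i, ⟨⟨?_, ?_⟩, ?_⟩⟩
          · intro x hx
            rw [mem_erase] at hx
            have hxik : x ≠ i - k := fun h => hikD (h ▸ hx.2)
            rw [hA', mem_erase, mem_erase]
            exact ⟨hxik, hx.1, hDA hx.2⟩
          · intro t ht
            obtain ⟨ht1, ht2, ht3, ht4⟩ := hsep t ht
            rw [mem_erase, mem_erase]
            have h5 := hcond t (mem_insert_of_mem ht)
            constructor
            · intro h6 h7
              exact (h5.mp h6.2) h7.2
            · intro h6
              exact ⟨ht1, h5.mpr (fun h7 => h6 ⟨ht3, h7⟩)⟩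
          · exact insert_erase hiD
        · right
          have hikD : i - k ∈ D := by
            by_contra h
            exact hiD (hcondi.mpr h)
          refine ⟨D.erase (i - k), ⟨⟨?_, ?_⟩, ?_⟩⟩
          · intro x hx
            rw [mem_erase] at hx
            have hxi : x ≠ i := fun h => hiD (h ▸ hx.2)
            rw [hA', mem_erase, mem_erase]
            exact ⟨hx.1, hxi, hDA hx.2⟩
          · intro t ht
            obtain ⟨ht1, ht2, ht3, ht4⟩ := hsep t ht
            have h5 := hcond t (mem_insert_of_mem ht)
            rw [mem_erase, mem_erase]
            constructor
            · intro h6 h7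
              exact (h5.mp h6.2) h7.2
            · intro h6
              exact ⟨ht2, h5.mpr (fun h7 => h6 ⟨ht4, h7⟩)⟩
          · exact insert_erase hikD
      · rintro (⟨D', ⟨⟨hD'A, hQ'⟩, rfl⟩⟩ | ⟨D', ⟨⟨hD'A, hQ'⟩, rfl⟩⟩)
        · have hiD' : i ∉ D' := fun h => hiA' (hD'A h)
          have hikD' : i - k ∉ D' := fun h => hikA' (hD'A h)
          refine ⟨insert_subset hiA (hD'A.trans hA'sub), ?_⟩
          intro t ht
          rcases mem_insert.1 ht with rfl | ht'
          · simp [mem_insert, hne, hikD']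
          · obtain ⟨ht1, ht2, ht3, ht4⟩ := hsep t ht'
            have h5 := hQ' t ht'
            simp only [mem_insert]
            constructor
            · rintro (h | h) h7
              · exact ht1 h
              · rcases h7 with h7 | h7
                · exact ht3 h7
                · exact (h5.mp h) h7
            · intro h6
              right
              apply h5.mpr
              intro h7
              exact h6 (Or.inr h7)
        · have hiD' : i ∉ D' := fun h => hiA' (hD'A h)
          have hikD' : i - k ∉ D' := fun h => hikA' (hD'A h)
          refine ⟨insert_subset hikA (hD'A.trans hA'sub), ?_⟩
          intro t ht
          rcases mem_insert.1 ht with rfl | ht'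
          · simp [mem_insert, Ne.symm hne, hiD', hne]
          · obtain ⟨ht1, ht2, ht3, ht4⟩ := hsep t ht'
            have h5 := hQ' t ht'
            simp only [mem_insert]
            constructor
            · rintro (h | h) h7
              · exact ht2 h
              · rcases h7 with h7 | h7
                · exact ht4 h7
                · exact (h5.mp h) h7
            · intro h6
              right
              apply h5.mpr
              intro h7
              exact h6 (Or.inr h7)
    have hinj : ∀ a : ℕ, a ∉ A' → ∀ x ∈ A'.powerset.filter (fun D => ∀ t ∈ P', (t ∈ D ↔ ¬ t - k ∈ D)),
        ∀ y ∈ A'.powerset.filter (fun D => ∀ t ∈ P', (t ∈ D ↔ ¬ t - k ∈ D)),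
        insert a x = insert a y → x = y := by
      intro a ha x hx y hy h
      have hax : a ∉ x := fun h' => ha (mem_powerset.1 (mem_filter.1 hx).1 h')
      have hay : a ∉ y := fun h' => ha (mem_powerset.1 (mem_filter.1 hy).1 h')
      rw [← erase_insert hax, h, erase_insert hay]
    have hdisj : Disjoint
        ((A'.powerset.filter (fun D => ∀ t ∈ P', (t ∈ D ↔ ¬ t - k ∈ D))).image (insert i))
        ((A'.powerset.filter (fun D => ∀ t ∈ P', (t ∈ D ↔ ¬ t - k ∈ D))).image
          (insert (i - k))) := by
      rw [disjoint_left]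
      rintro x hx1 hx2
      obtain ⟨D1, hD1, rfl⟩ := mem_image.1 hx1
      obtain ⟨D2, hD2, he⟩ := mem_image.1 hx2
      have hiD2 : i ∉ D2 := fun h => hiA' (mem_powerset.1 (mem_filter.1 hD2).1 h)
      have : i ∈ insert (i - k) D2 := by
        rw [he]
        exact mem_insert_self _ _
      rcases mem_insert.1 this with h | h
      · exact hne h.symm
      · exact hiD2 h
    constructor
    · rw [card_insert_of_notMem hiP']
      omega
    · rw [hQ, sum_union hdisj, sum_image (hinj i hiA'), sum_image (hinj (i - k) hikA')]
      have hrw : ∀ a : ℕ, a ∉ A' →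
          ∑ D' ∈ A'.powerset.filter (fun D => ∀ t ∈ P', (t ∈ D ↔ ¬ t - k ∈ D)),
            (PowerSeries.X : PowerSeries ℤ) ^ (insert a D').card =
          (∑ D' ∈ A'.powerset.filter (fun D => ∀ t ∈ P', (t ∈ D ↔ ¬ t - k ∈ D)),
            (PowerSeries.X : PowerSeries ℤ) ^ D'.card) * PowerSeries.X := by
        intro a ha
        rw [sum_mul]
        refine sum_congr rfl fun D' hD' => ?_
        have haD' : a ∉ D' := fun h' => ha (mem_powerset.1 (mem_filter.1 hD').1 h')
        rw [card_insert_of_notMem haD', pow_succ]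
      rw [hrw i hiA', hrw (i - k) hikA', ihs, card_insert_of_notMem hiP']
      have hexp : A.card - 2 * (P'.card + 1) = A'.card - 2 * P'.card := by omega
      rw [hexp, pow_succ]
      ring

lemma lpeak_adj (n k : ℕ) (π : ℤ → ℤ) : ∀ i ∈ LpeakSet n k π, i + k ∉ LpeakSet n k π := by
  intro i hi hcon
  simp only [LpeakSet, mem_filter, mem_Icc] at hi hcon
  have h2 := hi.2.2
  have h3 := hcon.2.1
  have e : ((i + k : ℕ) : ℤ) - (k : ℤ) = (i : ℤ) := by push_cast; ring
  rw [e] at h3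
  have e2 : ((i + k : ℕ) : ℤ) = (i : ℤ) + (k : ℤ) := by push_cast; ring
  rw [e2] at h3
  exact absurd h3 (not_lt.2 (le_of_lt h2))

lemma symm_iff (k : ℕ) (P : Finset ℕ) (hP : ∀ t ∈ P, k ≤ t) :
    ∀ D : Finset ℕ, ∀ t ∈ P,
      (t ∈ symmDiff D (D.image (· + k)) ↔ (t ∈ D ↔ ¬ t - k ∈ D)) := by
  intro D t ht
  have hk2 := hP t ht
  have himg : t ∈ D.image (· + k) ↔ t - k ∈ D := by
    simp only [mem_image]
    constructor
    · rintro ⟨a, ha, rfl⟩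
      simpa using ha
    · intro h3
      exact ⟨t - k, h3, by omega⟩
  rw [Finset.mem_symmDiff, himg]
  tauto


theorem main_gen (n k : ℕ) (hk : 1 ≤ k) (hkn : k ≤ n) (π : ℤ → ℤ) :
    PowerSeries.mk (fun p => (OmegaL n k p π : ℤ)) *
        (1 - PowerSeries.X) ^ (n - k + 2) *
        (1 + PowerSeries.X) ^ (2 * lpeakk n k π) =
      (2 : PowerSeries ℤ) ^ (k - 1) * (1 + PowerSeries.X) ^ (n - k + 1) *
        (4 * PowerSeries.X) ^ lpeakk n k π := by
  have hLc : lpeakk n k π = (LpeakSet n k π).card := rfl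
  have hPk : ∀ t ∈ LpeakSet n k π, k ≤ t ∧ t ≤ n - k := by
    intro t ht
    rw [LpeakSet, mem_filter, mem_Icc] at ht
    exact ht.1
  have hadjP : ∀ i ∈ LpeakSet n k π, i + k ∉ LpeakSet n k π := lpeak_adj n k π
  have hPA : ∀ i ∈ LpeakSet n k π,
      i ∈ range (n - k + 1) ∧ i - k ∈ range (n - k + 1) ∧ k ≤ i := by
    intro i hi
    obtain ⟨h1, h2⟩ := hPk i hi
    exact ⟨mem_range.2 (by omega), mem_range.2 (by omega), h1⟩
  obtain ⟨hcard2, hsum⟩ :=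
    subset_sum k hk (LpeakSet n k π) (range (n - k + 1)) hPA hadjP
  rw [card_range] at hcard2 hsum
  have hfilter : (Finset.range (n - k + 1)).powerset.filter
        (fun D => LpeakSet n k π ⊆ symmDiff D (D.image (· + k)))
      = (range (n - k + 1)).powerset.filter
          (fun D => ∀ t ∈ LpeakSet n k π, (t ∈ D ↔ ¬ t - k ∈ D)) := by
    refine filter_congr fun D _ => ?_
    rw [subset_iff]
    constructor
    · intro h t ht
      exact (symm_iff k (LpeakSet n k π) (fun t ht => (hPk t ht).1) D t ht).mp (h ht)
    · intro h x hx
      exact (symm_iff k (LpeakSet n k π) (fun t ht => (hPk t ht).1) D x hx).mpr (h x hx)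
  have hgf : ∀ D ∈ (range (n - k + 1)).powerset.filter
      (fun D => ∀ t ∈ LpeakSet n k π, (t ∈ D ↔ ¬ t - k ∈ D)),
      PowerSeries.mk (fun p => (OmegaBD n k p D : ℤ)) *
          (1 - PowerSeries.X) ^ (n - k + 1 + 1)
        = PowerSeries.X ^ D.card := by
    intro D hDf
    have hD : D ⊆ range (n - k + 1) := mem_powerset.1 (mem_filter.1 hDf).1
    have hcD : D.card ≤ n - k + 1 := card_le_of_subset_range hD
    have hval : ∀ p, OmegaBD n k p D = (p + (n - k + 1) - D.card).choose (n - k + 1) :=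
      fun p => omega_card (n - k) p D hD
    have hmk2 : PowerSeries.mk (fun p => (OmegaBD n k p D : ℤ))
        = PowerSeries.mk
            (fun p => (((p + (n - k + 1) - D.card).choose (n - k + 1) : ℕ) : ℤ)) := by
      ext p
      rw [PowerSeries.coeff_mk, PowerSeries.coeff_mk, hval p]
    rw [hmk2]
    exact gf_choose (n - k + 1) D.card hcD
  have hmk : PowerSeries.mk (fun p => (OmegaL n k p π : ℤ))
      = PowerSeries.C (R := ℤ) ((2 : ℤ) ^ ((LpeakSet n k π).card + k - 1)) *
        ∑ D ∈ (Finset.range (n - k + 1)).powerset.filter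
            (fun D => LpeakSet n k π ⊆ symmDiff D (D.image (· + k))),
          PowerSeries.mk (fun p => (OmegaBD n k p D : ℤ)) := by
    ext p
    simp only [PowerSeries.coeff_mk, PowerSeries.coeff_C_mul, map_sum, OmegaL]
    push_cast
    ring
  have hm2 : n - k + 2 = n - k + 1 + 1 := by omega
  rw [hLc, hmk, hfilter, hm2,
    mul_assoc (PowerSeries.C (R := ℤ) ((2 : ℤ) ^ ((LpeakSet n k π).card + k - 1)))]
  rw [Finset.sum_mul, Finset.sum_congr rfl hgf, hsum]
  have hCa : (PowerSeries.C (R := ℤ)) ((2 : ℤ) ^ ((LpeakSet n k π).card + k - 1))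
      = (2 : PowerSeries ℤ) ^ (LpeakSet n k π).card * (2 : PowerSeries ℤ) ^ (k - 1) := by
    rw [show (LpeakSet n k π).card + k - 1 = (LpeakSet n k π).card + (k - 1) by omega,
      pow_add, map_mul, map_pow, map_pow]
    norm_num
  have h4 : (2 : PowerSeries ℤ) ^ (LpeakSet n k π).card
      * (2 * PowerSeries.X) ^ (LpeakSet n k π).card
      = (4 * PowerSeries.X) ^ (LpeakSet n k π).card := by
    rw [← mul_pow]
    congr 1
    ring
  have h1x : (1 + PowerSeries.X : PowerSeries ℤ) ^ (n - k + 1 - 2 * (LpeakSet n k π).card)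
      * (1 + PowerSeries.X) ^ (2 * (LpeakSet n k π).card)
      = (1 + PowerSeries.X) ^ (n - k + 1) := by
    rw [← pow_add]
    congr 1
    omega
  rw [hCa, ← h4, ← h1x]
  ring

/-- Theorem 22:
`Σ_{p ≥ 0} Ω^{(ℓ)}(σ,k,p) x^p = 2^{k-1} (1+x)^{n-k+1}/(1-x)^{n-k+2} · (4x/(1+x)²)^{lpeak_k(σ)}`,
as an identity of formal power series with denominators cleared. -/
theorem stmt13 (n k : ℕ) (hk : 1 ≤ k) (hkn : k ≤ n) (σ : Equiv.Perm (Fin n)) :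
    PowerSeries.mk (fun p => (OmegaL n k p (bval n σ fun _ => false) : ℤ)) *
        (1 - PowerSeries.X) ^ (n - k + 2) *
        (1 + PowerSeries.X) ^ (2 * lpeakk n k (bval n σ fun _ => false)) =
      (2 : PowerSeries ℤ) ^ (k - 1) * (1 + PowerSeries.X) ^ (n - k + 1) *
        (4 * PowerSeries.X) ^ lpeakk n k (bval n σ fun _ => false) := by
  exact main_gen n k hk hkn _
end

section
/- For all n ≥ 1 and 1 ≤ k ≤ n, the width-k left peak polynomial W_{n,k}^{(ℓ)}(x) = Σ_{σ ∈ S_n} x^{lpeak_k(σ)} and the width-k type-B Eulerian polynomial WB_{n,k}(x) = Σ_{π ∈ B_n} x^{des_k^B(π)} are related by W_{n,k}^{(ℓ)}(4x/(1+x)²) = WB_{n,k}(x) / (2^{k-1}(1+x)^{n-k+1}), as an identity of rational functions in x. -/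
open Finset

namespace S14

noncomputable section

def XK : RatFunc ℚ := RatFunc.X
def QK : RatFunc ℚ := 4 * XK / (1 + XK) ^ 2

lemma hX1 : (1 + XK : RatFunc ℚ) ≠ 0 := by
  have h : (1 + XK : RatFunc ℚ) = algebraMap (Polynomial ℚ) (RatFunc ℚ) (1 + Polynomial.X) := by
    simp [XK, map_add, RatFunc.algebraMap_X]
  rw [h]
  apply RatFunc.algebraMap_ne_zero
  intro hc
  have := congrArg (Polynomial.eval (1:ℚ)) hc
  simp at this

/-- signed word -/
def sw (b : ℕ → Bool) (W : ℕ → ℤ) : ℕ → ℤ := fun j => if b j then -W j else W j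

/-- extend a finite sign vector by `false` -/
def esgn (m : ℕ) (ε : Fin m → Bool) : ℕ → Bool := fun j => if h : j < m then ε ⟨j, h⟩ else false

/-- descents inside the word `U 0, …, U (m-1)` -/
def dtail (m : ℕ) (U : ℕ → ℤ) : ℕ := ∑ j ∈ range (m - 1), if U (j + 1) < U j then 1 else 0

/-- descents of the word prefixed by the fixed value `c` -/
def ds (c : ℤ) (m : ℕ) (U : ℕ → ℤ) : ℕ :=
  (if 1 ≤ m ∧ U 0 < c then 1 else 0) + dtail m U

/-- interior peaks of `W 0, …, W (m-1)` -/
def ipk (m : ℕ) (W : ℕ → ℤ) : ℕ :=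
  ∑ j ∈ range (m - 2), if W j < W (j + 1) ∧ W (j + 2) < W (j + 1) then 1 else 0

/-- left peaks -/
def lpk (m : ℕ) (W : ℕ → ℤ) : ℕ := (if 2 ≤ m ∧ W 1 < W 0 then 1 else 0) + ipk m W

def GA (c : ℤ) (m : ℕ) (W : ℕ → ℤ) : RatFunc ℚ :=
  ∑ ε : Fin m → Bool, XK ^ ds c m (sw (esgn m ε) W)

def GF (m : ℕ) (W : ℕ → ℤ) : RatFunc ℚ :=
  ∑ ε : Fin m → Bool, XK ^ dtail m (sw (esgn m ε) W)

lemma sum_pi_succ {M : Type*} [AddCommMonoid M] (m : ℕ) (f : (Fin (m + 1) → Bool) → M) :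
    ∑ ε : Fin (m + 1) → Bool, f ε
      = (∑ ε : Fin m → Bool, f (Fin.cons false ε)) + ∑ ε : Fin m → Bool, f (Fin.cons true ε) := by
  rw [← (Fintype.sum_equiv (Fin.consEquiv (fun _ : Fin (m+1) => Bool))
    (fun p => f (Fin.cons p.1 p.2)) f (fun p => rfl))]
  rw [Fintype.sum_prod_type, Fintype.sum_bool]
  exact add_comm _ _

lemma sw_esgn_cons_false (m : ℕ) (ε : Fin m → Bool) (W : ℕ → ℤ) :
    sw (esgn (m + 1) (Fin.cons false ε)) W 0 = W 0 := by
  simp [sw, esgn]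

lemma sw_esgn_cons_true (m : ℕ) (ε : Fin m → Bool) (W : ℕ → ℤ) :
    sw (esgn (m + 1) (Fin.cons true ε)) W 0 = -W 0 := by
  simp [sw, esgn]

lemma sw_esgn_cons_succ (m : ℕ) (b : Bool) (ε : Fin m → Bool) (W : ℕ → ℤ) :
    (fun j => sw (esgn (m + 1) (Fin.cons b ε)) W (j + 1))
      = sw (esgn m ε) (fun j => W (j + 1)) := by
  funext j
  by_cases h : j < m
  · have h' : j + 1 < m + 1 := by omega
    simp only [sw, esgn, dif_pos h, dif_pos h']
    have : (⟨j + 1, h'⟩ : Fin (m + 1)) = Fin.succ ⟨j, h⟩ := rfl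
    rw [this, Fin.cons_succ]
  · have h' : ¬ (j + 1 < m + 1) := by omega
    simp only [sw, esgn, dif_neg h, dif_neg h']

lemma dtail_succ (m : ℕ) (U : ℕ → ℤ) :
    dtail (m + 1) U = (if 1 ≤ m ∧ U 1 < U 0 then 1 else 0) + dtail m (fun j => U (j + 1)) := by
  cases m with
  | zero => simp [dtail]
  | succ t =>
      unfold dtail
      rw [show t + 1 + 1 - 1 = t + 1 from rfl, Finset.sum_range_succ']
      rw [show t + 1 - 1 = t from rfl]
      simp only [Nat.le_add_left, true_and, zero_add]
      omega

lemma dtail_succ' (m : ℕ) (U : ℕ → ℤ) :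
    dtail (m + 1) U = ds (U 0) m (fun j => U (j + 1)) := by
  rw [dtail_succ]; rfl

lemma ds_succ (c : ℤ) (m : ℕ) (U : ℕ → ℤ) :
    ds c (m + 1) U = (if U 0 < c then 1 else 0) + ds (U 0) m (fun j => U (j + 1)) := by
  unfold ds
  rw [dtail_succ]
  have : (if 1 ≤ m + 1 ∧ U 0 < c then 1 else 0) = (if U 0 < c then (1:ℕ) else 0) := by
    simp [Nat.succ_le_succ]
  rw [this]

lemma GA_zero (c : ℤ) (W : ℕ → ℤ) : GA c 0 W = 1 := by
  simp [GA, ds, dtail]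

lemma GA_peel (c : ℤ) (m : ℕ) (W : ℕ → ℤ) :
    GA c (m + 1) W
      = XK ^ (if W 0 < c then 1 else 0) * GA (W 0) m (fun j => W (j + 1))
        + XK ^ (if -W 0 < c then 1 else 0) * GA (-W 0) m (fun j => W (j + 1)) := by
  unfold GA
  rw [sum_pi_succ]
  congr 1
  · rw [Finset.mul_sum]
    apply Finset.sum_congr rfl
    intro ε _
    rw [ds_succ, sw_esgn_cons_succ, sw_esgn_cons_false, pow_add]
  · rw [Finset.mul_sum]
    apply Finset.sum_congr rfl
    intro ε _
    rw [ds_succ, sw_esgn_cons_succ, sw_esgn_cons_true, pow_add]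

lemma GF_peel (m : ℕ) (W : ℕ → ℤ) :
    GF (m + 1) W = GA (W 0) m (fun j => W (j + 1)) + GA (-W 0) m (fun j => W (j + 1)) := by
  unfold GF
  rw [sum_pi_succ]
  congr 1
  · apply Finset.sum_congr rfl
    intro ε _
    rw [dtail_succ', sw_esgn_cons_succ, sw_esgn_cons_false]
  · apply Finset.sum_congr rfl
    intro ε _
    rw [dtail_succ', sw_esgn_cons_succ, sw_esgn_cons_true]

lemma ipk_one (W : ℕ → ℤ) : ipk 1 W = 0 := by simp [ipk]

lemma ipk_two (W : ℕ → ℤ) : ipk 2 W = 0 := by simp [ipk]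

lemma ipk_succ (m : ℕ) (W : ℕ → ℤ) :
    ipk (m + 1 + 1) W
      = (if W 0 < W 1 ∧ W 2 < W 1 ∧ 1 ≤ m then 1 else 0) + ipk (m + 1) (fun j => W (j + 1)) := by
  cases m with
  | zero => simp [ipk]
  | succ t =>
      unfold ipk
      rw [show t + 1 + 1 + 1 - 2 = t + 1 from rfl, Finset.sum_range_succ']
      rw [show t + 1 + 1 - 2 = t from rfl]
      simp only [Nat.le_add_left, and_true, zero_add]
      have harith : ∀ x : ℕ, x + 2 + 1 = x + 1 + 2 := fun x => by omega
      simp only [harith]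
      omega

lemma main (t : ℕ) : ∀ (W : ℕ → ℤ), (∀ j, j < t + 1 → 0 < W j) →
    (∀ j, j + 1 < t + 1 → W j ≠ W (j + 1)) →
    (GA (W 0) t (fun j => W (j + 1))
        = (if W 1 < W 0 ∧ 1 ≤ t then 2 * XK / (1 + XK) else 1)
            * ((1 + XK) ^ t * QK ^ ipk (t + 1) W)
      ∧ GA (-W 0) t (fun j => W (j + 1))
        = (if W 1 < W 0 ∧ 1 ≤ t then 2 / (1 + XK) else 1)
            * ((1 + XK) ^ t * QK ^ ipk (t + 1) W)) := by
  induction t with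
  | zero =>
      intro W _ _
      simp [GA_zero, ipk_one]
  | succ t ih =>
      intro W hpos hdis
      have hp0 : 0 < W 0 := hpos 0 (by omega)
      have hp1 : 0 < W 1 := hpos 1 (by omega)
      have h01 : W 0 ≠ W 1 := hdis 0 (by omega)
      obtain ⟨ih1, ih2⟩ := ih (fun j => W (j + 1)) (fun j hj => hpos (j + 1) (by omega))
        (fun j hj => hdis (j + 1) (by omega))
      rw [GA_peel, GA_peel]
      have QK_def : QK = 4 * XK / (1 + XK) ^ 2 := rfl
      have hneg : -W 1 < W 0 := by omega
      have hneg' : ¬ (W 1 < -W 0) := by omega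
      rcases h01.lt_or_gt with hlt | hlt
      · -- W 0 < W 1 : ascent at the front
        rw [if_neg (by omega : ¬ (W 1 < W 0)), if_pos hneg, if_neg hneg',
          if_pos (by omega : -W 1 < -W 0)]
        rw [if_neg (by push_neg; intro h; omega : ¬ (W 1 < W 0 ∧ 1 ≤ t + 1)),
          if_neg (by push_neg; intro h; omega : ¬ (W 1 < W 0 ∧ 1 ≤ t + 1))]
        rw [ipk_succ]
        by_cases hc : W 2 < W 1 ∧ 1 ≤ t
        · rw [if_pos hc] at ih1 ih2
          rw [if_pos ⟨hlt, hc.1, hc.2⟩, ih1, ih2]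
          rw [pow_succ (1 + XK) t, pow_add QK 1 _, pow_one]
          generalize (QK ^ ipk (t + 1) fun j => W (j + 1)) = P
          rw [QK_def]
          constructor <;> (field_simp [hX1]; ring)
        · rw [if_neg hc] at ih1 ih2
          rw [if_neg (by tauto), ih1, ih2]
          rw [zero_add (ipk (t + 1) fun j => W (j + 1)), pow_succ (1 + XK) t]
          generalize (QK ^ ipk (t + 1) fun j => W (j + 1)) = P
          constructor <;> field_simp [hX1]
      · -- W 1 < W 0 : descent at the front
        rw [if_pos hlt, if_pos hneg, if_neg hneg',
          if_neg (by omega : ¬ (-W 1 < -W 0))]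
        rw [if_pos ⟨hlt, by omega⟩, if_pos ⟨hlt, by omega⟩]
        rw [ipk_succ, if_neg (by push_neg; intro h; omega : ¬ (W 0 < W 1 ∧ W 2 < W 1 ∧ 1 ≤ t)),
          zero_add (ipk (t + 1) fun j => W (j + 1))]
        by_cases hc : W 2 < W 1 ∧ 1 ≤ t
        · rw [if_pos hc] at ih1 ih2
          rw [ih1, ih2, pow_succ (1 + XK) t]
          generalize (QK ^ ipk (t + 1) fun j => W (j + 1)) = P
          constructor <;> (field_simp [hX1]; ring)
        · rw [if_neg hc] at ih1 ih2
          rw [ih1, ih2, pow_succ (1 + XK) t]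
          generalize (QK ^ ipk (t + 1) fun j => W (j + 1)) = P
          constructor <;> (field_simp [hX1]; ring)

lemma GF_eq (t : ℕ) (W : ℕ → ℤ) (hpos : ∀ j, j < t + 1 → 0 < W j)
    (hdis : ∀ j, j + 1 < t + 1 → W j ≠ W (j + 1)) :
    GF (t + 1) W = 2 * ((1 + XK) ^ t * QK ^ ipk (t + 1) W) := by
  obtain ⟨h1, h2⟩ := main t W hpos hdis
  rw [GF_peel, h1, h2]
  by_cases hc : W 1 < W 0 ∧ 1 ≤ t
  · rw [if_pos hc, if_pos hc]
    generalize ((1 + XK) ^ t * QK ^ ipk (t + 1) W) = P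
    field_simp [hX1]
    ring
  · rw [if_neg hc, if_neg hc]
    ring

lemma GA0_eq (t : ℕ) (W : ℕ → ℤ) (hpos : ∀ j, j < t + 1 → 0 < W j)
    (hdis : ∀ j, j + 1 < t + 1 → W j ≠ W (j + 1)) :
    GA 0 (t + 1) W = (1 + XK) ^ (t + 1) * QK ^ lpk (t + 1) W := by
  obtain ⟨h1, h2⟩ := main t W hpos hdis
  have hp0 : 0 < W 0 := hpos 0 (by omega)
  rw [GA_peel, if_neg (by omega : ¬ (W 0 < 0)), if_pos (by omega : -W 0 < 0), h1, h2]
  unfold lpk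
  by_cases hc : W 1 < W 0 ∧ 1 ≤ t
  · rw [if_pos hc, if_pos hc, if_pos (by exact ⟨by omega, hc.1⟩ : 2 ≤ t + 1 ∧ W 1 < W 0)]
    rw [pow_succ (1 + XK) t, pow_add QK 1 _, pow_one]
    have QK_def : QK = 4 * XK / (1 + XK) ^ 2 := rfl
    generalize (QK ^ ipk (t + 1) W) = P
    rw [QK_def]
    field_simp [hX1]
    ring
  · rw [if_neg hc, if_neg hc,
      if_neg (by intro h; exact hc ⟨h.2, by omega⟩ : ¬ (2 ≤ t + 1 ∧ W 1 < W 0))]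
    rw [zero_add (ipk (t + 1) W), pow_succ (1 + XK) t]
    ring

/-! ### Global setup -/

variable (n k : ℕ)

/-- unsigned position values determined by `σ` -/
def vv (σ : Equiv.Perm (Fin n)) : ℕ → ℤ := fun p =>
  if h : 1 ≤ p ∧ p ≤ n then (((σ ⟨p - 1, by omega⟩ : Fin n) : ℕ) : ℤ) + 1 else 0

/-- extension of a sign vector to ℕ (1-indexed positions) -/
def eext (ε : Fin n → Bool) : ℕ → Bool := fun p =>
  if h : 1 ≤ p ∧ p ≤ n then ε ⟨p - 1, by omega⟩ else false

/-- length of the `r`-th chain -/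
def mch (r : Fin k) : ℕ := (n - 1 - r) / k + 1

lemma mem_mch (hk : 1 ≤ k) (hkn : k ≤ n) (r : Fin k) (j : ℕ) :
    j < mch n k r ↔ (r : ℕ) + j * k < n := by
  have hr : (r : ℕ) < k := r.2
  unfold mch
  rw [Nat.lt_succ_iff, Nat.le_div_iff_mul_le (by omega : 0 < k)]
  omega


/-- reindexing a sum over `range N` by chains -/
lemma RX {M : Type*} [AddCommMonoid M] (hk : 1 ≤ k) (N : ℕ) (cnt : Fin k → ℕ)
    (hcnt : ∀ (r : Fin k) (j : ℕ), j < cnt r ↔ (r : ℕ) + j * k < N) (g : ℕ → M) :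
    ∑ i ∈ range N, g i = ∑ r : Fin k, ∑ j ∈ range (cnt r), g ((r : ℕ) + j * k) := by
  rw [← Finset.sum_sigma (univ : Finset (Fin k)) (fun r => range (cnt r))
    (fun p => g ((p.1 : ℕ) + p.2 * k))]
  apply Finset.sum_nbij' (i := fun i => (⟨⟨i % k, Nat.mod_lt _ (by omega)⟩, i / k⟩ :
      Σ _ : Fin k, ℕ)) (j := fun p => (p.1 : ℕ) + p.2 * k)
  · intro i hi
    rw [Finset.mem_range] at hi
    rw [Finset.mem_sigma]
    refine ⟨Finset.mem_univ _, ?_⟩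
    rw [Finset.mem_range, hcnt]
    simpa [Nat.mod_add_div'] using hi
  · intro p hp
    rw [Finset.mem_sigma, Finset.mem_range] at hp
    rw [Finset.mem_range, ← hcnt]
    exact hp.2
  · intro i hi
    simp [Nat.mod_add_div']
  · intro p hp
    rw [Finset.mem_sigma, Finset.mem_range] at hp
    have hr : (p.1 : ℕ) < k := p.1.2
    have h1 : ((p.1 : ℕ) + p.2 * k) % k = (p.1 : ℕ) := by
      rw [Nat.add_mul_mod_self_right, Nat.mod_eq_of_lt hr]
    have h2 : ((p.1 : ℕ) + p.2 * k) / k = p.2 := by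
      rw [Nat.add_mul_div_right _ _ (by omega : 0 < k), Nat.div_eq_of_lt hr, zero_add]
    obtain ⟨r, j⟩ := p
    refine Sigma.ext ?_ ?_
    · exact Fin.ext h1
    · exact heq_of_eq h2
  · intro i hi
    simp [Nat.mod_add_div']

lemma sum_mch (hk : 1 ≤ k) (hkn : k ≤ n) :
    ∑ r : Fin k, mch n k r = n := by
  have := (RX k hk n (mch n k) (mem_mch n k hk hkn) (fun _ => (1 : ℕ))).symm
  simpa using this

lemma kpred (hk : 1 ≤ k) : ((⟨k - 1, by omega⟩ : Fin k) : ℕ) = k - 1 := rfl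

/-- sum of an indicator over `Fin k` concentrated at `r = k-1` -/
lemma sum_ite_last {M : Type*} [AddCommMonoid M] (hk : 1 ≤ k) (c : Fin k → M) :
    ∑ r : Fin k, (if (r : ℕ) = k - 1 then c r else 0) = c ⟨k - 1, by omega⟩ := by
  have h : ∀ r : Fin k, ((r : ℕ) = k - 1) = (r = ⟨k - 1, by omega⟩) := by
    intro r; rw [Fin.ext_iff]
  simp only [h]
  rw [Finset.sum_ite_eq' univ (⟨k - 1, by omega⟩ : Fin k) c]
  simp

/-- global width-k descent decomposition -/
lemma GD (hk : 1 ≤ k) (hkn : k ≤ n) (u : ℕ → ℤ) (hu0 : u 0 = 0) :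
    ∑ i ∈ range (n - k + 1), (if u (i + k) < u i then (1:ℕ) else 0)
      = ∑ r : Fin k, (if (r : ℕ) = k - 1
          then ds 0 (mch n k r) (fun j => u ((r : ℕ) + 1 + j * k))
          else dtail (mch n k r) (fun j => u ((r : ℕ) + 1 + j * k))) := by
  rw [Finset.sum_range_succ' (fun i => if u (i + k) < u i then (1:ℕ) else 0) (n - k)]
  have hstep : ∀ r : Fin k, ∀ j : ℕ, j < mch n k r - 1 ↔ (r : ℕ) + j * k < n - k := by
    intro r j
    have h1 : j + 1 < mch n k r ↔ (r : ℕ) + (j + 1) * k < n := mem_mch n k hk hkn r (j + 1)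
    have h2 : 1 ≤ mch n k r := Nat.le_add_left 1 _
    have h3 : (j + 1) * k = j * k + k := by ring
    omega
  rw [RX k hk (n - k) (fun r => mch n k r - 1) hstep
    (fun i => if u (i + 1 + k) < u (i + 1) then (1:ℕ) else 0)]
  have hchain : ∀ r : Fin k,
      (∑ j ∈ range (mch n k r - 1), if u ((r:ℕ) + j * k + 1 + k) < u ((r:ℕ) + j * k + 1) then (1:ℕ) else 0)
        = dtail (mch n k r) (fun j => u ((r : ℕ) + 1 + j * k)) := by
    intro r
    unfold dtail
    apply Finset.sum_congr rfl
    intro j _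
    have e1 : (r:ℕ) + j * k + 1 + k = (r:ℕ) + 1 + (j + 1) * k := by ring
    have e2 : (r:ℕ) + j * k + 1 = (r:ℕ) + 1 + j * k := by ring
    rw [e1, e2]
  simp only [hchain]
  have hds : ∀ r : Fin k, (if (r : ℕ) = k - 1
          then ds 0 (mch n k r) (fun j => u ((r : ℕ) + 1 + j * k))
          else dtail (mch n k r) (fun j => u ((r : ℕ) + 1 + j * k)))
      = dtail (mch n k r) (fun j => u ((r : ℕ) + 1 + j * k))
        + (if (r : ℕ) = k - 1 then (if u ((r:ℕ) + 1 + 0 * k) < 0 then 1 else 0) else 0) := by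
    intro r
    by_cases hr : (r : ℕ) = k - 1
    · rw [if_pos hr, if_pos hr]
      unfold ds
      have h5 : (if 1 ≤ mch n k r ∧ (fun j => u ((r : ℕ) + 1 + j * k)) 0 < 0 then (1:ℕ) else 0)
          = (if u ((r:ℕ) + 1 + 0 * k) < 0 then 1 else 0) := by
        by_cases h : u ((r:ℕ) + 1 + 0 * k) < 0
        · rw [if_pos h, if_pos ⟨Nat.le_add_left 1 _, by simpa using h⟩]
        · rw [if_neg h, if_neg (by intro hh; exact h (by simpa using hh.2))]
      rw [h5]
      omega
    · rw [if_neg hr, if_neg hr, add_zero]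
  simp only [hds]
  rw [Finset.sum_add_distrib, sum_ite_last k hk]
  rw [kpred k hk]
  have e3 : k - 1 + 1 + 0 * k = 0 + k := by omega
  rw [e3, hu0, zero_add]

/-- global width-k left-peak decomposition -/
lemma GP (hk : 1 ≤ k) (hkn : k ≤ n) (v : ℕ → ℤ) (hv0 : v 0 = 0)
    (hpos : ∀ p, 1 ≤ p → p ≤ n → 0 < v p) :
    ∑ i ∈ Icc k (n - k), (if v (i - k) < v i ∧ v (i + k) < v i then (1:ℕ) else 0)
      = ∑ r : Fin k, (if (r : ℕ) = k - 1
          then lpk (mch n k r) (fun j => v ((r:ℕ) + 1 + j * k))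
          else ipk (mch n k r) (fun j => v ((r:ℕ) + 1 + j * k))) := by
  rw [← Finset.Ico_add_one_right_eq_Icc, Finset.sum_Ico_eq_sum_range]
  by_cases h2k : 2 * k ≤ n
  · have e : n - k + 1 - k = (n - 2 * k) + 1 := by omega
    rw [e, Finset.sum_range_succ']
    have hstep2 : ∀ r : Fin k, ∀ j : ℕ, j < mch n k r - 2 ↔ (r : ℕ) + j * k < n - 2 * k := by
      intro r j
      have h1 : j + 2 < mch n k r ↔ (r : ℕ) + (j + 2) * k < n := mem_mch n k hk hkn r (j + 2)
      have h3 : (j + 2) * k = j * k + 2 * k := by ring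
      omega
    rw [RX k hk (n - 2 * k) (fun r => mch n k r - 2) hstep2]
    have hchain : ∀ r : Fin k,
        (∑ j ∈ range (mch n k r - 2),
          if v (k + ((r:ℕ) + j * k + 1) - k) < v (k + ((r:ℕ) + j * k + 1)) ∧
              v (k + ((r:ℕ) + j * k + 1) + k) < v (k + ((r:ℕ) + j * k + 1))
          then (1:ℕ) else 0)
          = ipk (mch n k r) (fun j => v ((r : ℕ) + 1 + j * k)) := by
      intro r
      unfold ipk
      apply Finset.sum_congr rfl
      intro j _
      have e1 : k + ((r:ℕ) + j * k + 1) = (r:ℕ) + 1 + (j + 1) * k := by ring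
      have e2 : (r:ℕ) + 1 + (j + 1) * k - k = (r:ℕ) + 1 + j * k := by
        have : (j + 1) * k = j * k + k := by ring
        omega
      have e3 : (r:ℕ) + 1 + (j + 1) * k + k = (r:ℕ) + 1 + (j + 2) * k := by ring
      rw [e1, e2, e3]
    simp only [hchain]
    have hds : ∀ r : Fin k, (if (r : ℕ) = k - 1
            then lpk (mch n k r) (fun j => v ((r:ℕ) + 1 + j * k))
            else ipk (mch n k r) (fun j => v ((r:ℕ) + 1 + j * k)))
        = ipk (mch n k r) (fun j => v ((r:ℕ) + 1 + j * k))
          + (if (r : ℕ) = k - 1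
              then (if 2 ≤ mch n k r ∧
                  (fun j => v ((r:ℕ) + 1 + j * k)) 1 < (fun j => v ((r:ℕ) + 1 + j * k)) 0
                  then (1:ℕ) else 0)
              else 0) := by
      intro r
      by_cases hr : (r : ℕ) = k - 1
      · rw [if_pos hr, if_pos hr]
        unfold lpk
        omega
      · rw [if_neg hr, if_neg hr, add_zero]
    simp only [hds]
    rw [Finset.sum_add_distrib, sum_ite_last k hk]
    congr 1
    have h0k : 0 < v k := hpos k hk (by omega)
    have hmge : 2 ≤ mch n k (⟨k - 1, by omega⟩ : Fin k) := by
      unfold mch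
      rw [kpred k hk]
      have : 1 ≤ (n - 1 - (k - 1)) / k := by
        rw [Nat.le_div_iff_mul_le (by omega : 0 < k)]
        omega
      omega
    have hA : k + 0 - k = 0 := by omega
    have hB : k + 0 = k := by omega
    have hC : k + 0 + k = k + k := by omega
    have hbeta0 : ((⟨k - 1, by omega⟩ : Fin k) : ℕ) + 1 + 0 * k = k := by
      rw [kpred k hk]; omega
    have hbeta1 : ((⟨k - 1, by omega⟩ : Fin k) : ℕ) + 1 + 1 * k = k + k := by
      rw [kpred k hk]; omega
    have hD : k - k = 0 := by omega
    simp only [hA, hB, hC, hD, hv0, hbeta0, hbeta1]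
    refine if_congr ?_ rfl rfl
    constructor
    · intro h
      exact ⟨hmge, h.2⟩
    · intro h
      exact ⟨h0k, h.2⟩
  · have e : n - k + 1 - k = 0 := by omega
    rw [e]
    simp only [range_zero, Finset.sum_empty]
    symm
    apply Finset.sum_eq_zero
    intro r _
    have hm1 : (n - 1 - (r:ℕ)) / k < 2 := by
      rw [Nat.div_lt_iff_lt_mul (by omega : 0 < k)]
      have : (r:ℕ) < k := r.2
      omega
    have hm2 : mch n k r ≤ 2 := by unfold mch; omega
    have hipk : ipk (mch n k r) (fun j => v ((r:ℕ) + 1 + j * k)) = 0 := by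
      unfold ipk
      rw [show mch n k r - 2 = 0 by omega]
      simp
    by_cases hr : (r : ℕ) = k - 1
    · rw [if_pos hr]
      have hm3 : mch n k r = 1 := by
        unfold mch
        rw [hr, Nat.div_eq_of_lt (by omega)]
      rw [hm3] at hipk ⊢
      unfold lpk
      rw [hipk, if_neg (by omega : ¬ (2 ≤ 1 ∧ _ < _)), zero_add]
    · rw [if_neg hr]
      exact hipk

lemma pi_eval_congr {k : ℕ} {m : Fin k → ℕ} (δ : ∀ r : Fin k, Fin (m r) → Bool)
    {r r' : Fin k} (h : r = r') {j : Fin (m r)} {j' : Fin (m r')} (hj : (j : ℕ) = (j' : ℕ)) :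
    δ r j = δ r' j' := by
  subst h
  congr 1
  exact Fin.ext hj

/-- splitting the positions `0,…,n-1` into `k` chains -/
def Ech (hk : 1 ≤ k) (hkn : k ≤ n) : (Fin n → Bool) ≃ ((r : Fin k) → (Fin (mch n k r) → Bool)) where
  toFun ε r j := ε ⟨(r : ℕ) + (j : ℕ) * k, (mem_mch n k hk hkn r j).mp j.2⟩
  invFun δ p := δ ⟨(p : ℕ) % k, Nat.mod_lt _ (by omega)⟩
    ⟨(p : ℕ) / k, by
      rw [mem_mch n k hk hkn]
      simpa [Nat.mod_add_div'] using p.2⟩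
  left_inv := by
    intro ε
    funext p
    exact congrArg ε (Fin.ext (Nat.mod_add_div' (p : ℕ) k))
  right_inv := by
    intro δ
    funext r j
    have hr : (r : ℕ) < k := r.2
    have h1 : ((r : ℕ) + (j : ℕ) * k) % k = (r : ℕ) := by
      rw [Nat.add_mul_mod_self_right, Nat.mod_eq_of_lt hr]
    have h2 : ((r : ℕ) + (j : ℕ) * k) / k = (j : ℕ) := by
      rw [Nat.add_mul_div_right _ _ (by omega : 0 < k), Nat.div_eq_of_lt hr, zero_add]
    exact pi_eval_congr δ (Fin.ext h1) h2

/-- the signed chain word coming from `Ech` agrees with the global signed word -/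
lemma CA (hk : 1 ≤ k) (hkn : k ≤ n) (σ : Equiv.Perm (Fin n)) (ε : Fin n → Bool) (r : Fin k) :
    sw (esgn (mch n k r) (Ech n k hk hkn ε r)) (fun j => vv n σ ((r : ℕ) + 1 + j * k))
      = fun j => sw (eext n ε) (vv n σ) ((r : ℕ) + 1 + j * k) := by
  funext j
  by_cases hj : j < mch n k r
  · have hlt : (r : ℕ) + j * k < n := (mem_mch n k hk hkn r j).mp hj
    have hp : 1 ≤ (r : ℕ) + 1 + j * k ∧ (r : ℕ) + 1 + j * k ≤ n := by omega
    simp only [sw, esgn, eext, dif_pos hj, dif_pos hp]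
    have hfin : (⟨(r : ℕ) + 1 + j * k - 1, by omega⟩ : Fin n)
        = ⟨(r : ℕ) + j * k, hlt⟩ :=
      Fin.ext (show (r : ℕ) + 1 + j * k - 1 = (r : ℕ) + j * k by omega)
    rw [show (Ech n k hk hkn ε r) ⟨j, hj⟩ = ε ⟨(r : ℕ) + (⟨j, hj⟩ : Fin (mch n k r)) * k,
        (mem_mch n k hk hkn r _).mp hj⟩ from rfl]
    rw [hfin]
  · have hlt : ¬ ((r : ℕ) + j * k < n) := fun h => hj ((mem_mch n k hk hkn r j).mpr h)
    have hp : ¬ (1 ≤ (r : ℕ) + 1 + j * k ∧ (r : ℕ) + 1 + j * k ≤ n) := by omega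
    simp only [sw, esgn, eext, dif_neg hj, dif_neg hp]


/-! ### Bridges to `bval`, `desB`, `lpeakk` -/

lemma bval_cast (σ : Equiv.Perm (Fin n)) (ε : Fin n → Bool) (p : ℕ) :
    bval n σ ε (p : ℤ) = sw (eext n ε) (vv n σ) p := by
  unfold bval sw eext vv
  have hna : ((p : ℤ)).natAbs = p := Int.natAbs_natCast p
  simp only [hna]
  by_cases h : 1 ≤ p ∧ p ≤ n
  · rw [dif_pos h, dif_pos h, dif_pos h]
    have hsign : Int.sign (p : ℤ) = 1 := by
      rcases p with _ | q
      · omega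
      · exact Int.sign_eq_one_of_pos (by exact_mod_cast Nat.succ_pos q)
    rw [hsign, one_mul]
  · rw [dif_neg h, dif_neg h, dif_neg h]
    simp

lemma desB_eq (σ : Equiv.Perm (Fin n)) (ε : Fin n → Bool) :
    desB n k (bval n σ ε)
      = ∑ i ∈ range (n - k + 1),
          (if sw (eext n ε) (vv n σ) (i + k) < sw (eext n ε) (vv n σ) i then (1:ℕ) else 0) := by
  unfold desB
  rw [Finset.card_filter]
  apply Finset.sum_congr rfl
  intro i _
  have h1 := bval_cast n σ ε i
  have h2 : bval n σ ε ((i : ℤ) + (k : ℤ)) = sw (eext n ε) (vv n σ) (i + k) := by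
    rw [show ((i : ℤ) + (k : ℤ)) = (((i + k : ℕ)) : ℤ) by push_cast; ring]
    exact bval_cast n σ ε (i + k)
  simp only [gt_iff_lt, h1, h2]

lemma sw_false (σ : Equiv.Perm (Fin n)) :
    sw (eext n (fun _ => false)) (vv n σ) = vv n σ := by
  funext p
  by_cases h : 1 ≤ p ∧ p ≤ n <;> simp [sw, eext, h]

lemma lpeak_eq (σ : Equiv.Perm (Fin n)) :
    lpeakk n k (bval n σ (fun _ => false))
      = ∑ i ∈ Icc k (n - k),
          (if vv n σ (i - k) < vv n σ i ∧ vv n σ (i + k) < vv n σ i then (1:ℕ) else 0) := by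
  unfold lpeakk
  rw [Finset.card_filter]
  apply Finset.sum_congr rfl
  intro i hi
  have hki : k ≤ i := (Finset.mem_Icc.mp hi).1
  have h1 : bval n σ (fun _ => false) (i : ℤ) = vv n σ i := by
    rw [bval_cast, sw_false]
  have h2 : bval n σ (fun _ => false) ((i : ℤ) + (k : ℤ)) = vv n σ (i + k) := by
    rw [show ((i : ℤ) + (k : ℤ)) = (((i + k : ℕ)) : ℤ) by push_cast; ring]
    rw [bval_cast, sw_false]
  have h3 : bval n σ (fun _ => false) ((i : ℤ) - (k : ℤ)) = vv n σ (i - k) := by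
    rw [show ((i : ℤ) - (k : ℤ)) = (((i - k : ℕ)) : ℤ) by rw [Nat.cast_sub hki]]
    rw [bval_cast, sw_false]
  simp only [gt_iff_lt, h1, h2, h3]

lemma vv_pos (σ : Equiv.Perm (Fin n)) (p : ℕ) (h1 : 1 ≤ p) (h2 : p ≤ n) : 0 < vv n σ p := by
  unfold vv
  rw [dif_pos ⟨h1, h2⟩]
  have : (0:ℤ) ≤ ((σ ⟨p - 1, by omega⟩ : Fin n) : ℕ) := Int.natCast_nonneg _
  omega

lemma vv_zero (σ : Equiv.Perm (Fin n)) : vv n σ 0 = 0 := by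
  unfold vv
  rw [dif_neg (by omega)]

lemma vv_inj (σ : Equiv.Perm (Fin n)) (p q : ℕ) (hp : 1 ≤ p ∧ p ≤ n) (hq : 1 ≤ q ∧ q ≤ n)
    (hne : p ≠ q) : vv n σ p ≠ vv n σ q := by
  unfold vv
  rw [dif_pos hp, dif_pos hq]
  intro hcontra
  have h1 : ((σ ⟨p - 1, by omega⟩ : Fin n) : ℕ) = ((σ ⟨q - 1, by omega⟩ : Fin n) : ℕ) := by
    omega
  have h2 : σ ⟨p - 1, by omega⟩ = σ ⟨q - 1, by omega⟩ := Fin.ext h1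
  have h3 := σ.injective h2
  rw [Fin.mk.injEq] at h3
  omega

/-! ### The per-permutation identity -/

lemma per_sigma (hn : 1 ≤ n) (hk : 1 ≤ k) (hkn : k ≤ n) (σ : Equiv.Perm (Fin n)) :
    ∑ ε : Fin n → Bool, XK ^ desB n k (bval n σ ε)
      = 2 ^ (k - 1) * (1 + XK) ^ (n - k + 1)
          * QK ^ lpeakk n k (bval n σ (fun _ => false)) := by
  classical
  set v := vv n σ with hv
  have hchain_pos : ∀ r : Fin k, ∀ j, j < (mch n k r - 1) + 1 →
      0 < (fun j => v ((r : ℕ) + 1 + j * k)) j := by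
    intro r j hj
    have hj' : j < mch n k r := by
      have : 1 ≤ mch n k r := Nat.le_add_left 1 _
      omega
    have := (mem_mch n k hk hkn r j).mp hj'
    exact vv_pos n σ _ (by omega) (by omega)
  have hchain_dis : ∀ r : Fin k, ∀ j, j + 1 < (mch n k r - 1) + 1 →
      (fun j => v ((r : ℕ) + 1 + j * k)) j ≠ (fun j => v ((r : ℕ) + 1 + j * k)) (j + 1) := by
    intro r j hj
    have hj' : j + 1 < mch n k r := by
      have : 1 ≤ mch n k r := Nat.le_add_left 1 _
      omega
    have hlt1 : (r : ℕ) + (j + 1) * k < n := (mem_mch n k hk hkn r (j + 1)).mp hj'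
    have hmul : (j + 1) * k = j * k + k := by ring
    apply vv_inj n σ _ _ (by omega) (by omega)
    omega
  have step1 : ∀ ε : Fin n → Bool,
      (XK : RatFunc ℚ) ^ desB n k (bval n σ ε)
        = ∏ r : Fin k, (if (r : ℕ) = k - 1
            then XK ^ ds 0 (mch n k r) (sw (esgn (mch n k r) (Ech n k hk hkn ε r))
                (fun j => v ((r : ℕ) + 1 + j * k)))
            else XK ^ dtail (mch n k r) (sw (esgn (mch n k r) (Ech n k hk hkn ε r))
                (fun j => v ((r : ℕ) + 1 + j * k)))) := by
    intro ε
    rw [desB_eq n k σ ε]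
    rw [GD n k hk hkn (sw (eext n ε) (vv n σ)) (by
      show sw (eext n ε) (vv n σ) 0 = 0
      have h0 : eext n ε 0 = false := by unfold eext; rw [dif_neg (by omega)]
      unfold sw
      rw [h0]
      simp [vv_zero])]
    rw [← Finset.prod_pow_eq_pow_sum]
    apply Finset.prod_congr rfl
    intro r _
    rw [CA n k hk hkn σ ε r]
    by_cases hr : (r : ℕ) = k - 1
    · rw [if_pos hr, if_pos hr]
    · rw [if_neg hr, if_neg hr]
  simp only [step1]
  rw [Fintype.sum_equiv (Ech n k hk hkn)
    (fun ε => ∏ r : Fin k, (if (r : ℕ) = k - 1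
        then XK ^ ds 0 (mch n k r) (sw (esgn (mch n k r) (Ech n k hk hkn ε r))
            (fun j => v ((r : ℕ) + 1 + j * k)))
        else XK ^ dtail (mch n k r) (sw (esgn (mch n k r) (Ech n k hk hkn ε r))
            (fun j => v ((r : ℕ) + 1 + j * k)))))
    (fun δ => ∏ r : Fin k, (if (r : ℕ) = k - 1
        then XK ^ ds 0 (mch n k r) (sw (esgn (mch n k r) (δ r))
            (fun j => v ((r : ℕ) + 1 + j * k)))
        else XK ^ dtail (mch n k r) (sw (esgn (mch n k r) (δ r))
            (fun j => v ((r : ℕ) + 1 + j * k)))))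
    (fun ε => rfl)]
  rw [← Fintype.piFinset_univ]
  rw [← Finset.prod_univ_sum (fun _ : Fin k => (univ : Finset _))
    (fun r (δ : Fin (mch n k r) → Bool) => (if (r : ℕ) = k - 1
        then XK ^ ds 0 (mch n k r) (sw (esgn (mch n k r) δ)
            (fun j => v ((r : ℕ) + 1 + j * k)))
        else XK ^ dtail (mch n k r) (sw (esgn (mch n k r) δ)
            (fun j => v ((r : ℕ) + 1 + j * k)))))]
  have step3 : ∀ r : Fin k,
      (∑ δ ∈ (univ : Finset (Fin (mch n k r) → Bool)), (if (r : ℕ) = k - 1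
          then XK ^ ds 0 (mch n k r) (sw (esgn (mch n k r) δ)
              (fun j => v ((r : ℕ) + 1 + j * k)))
          else XK ^ dtail (mch n k r) (sw (esgn (mch n k r) δ)
              (fun j => v ((r : ℕ) + 1 + j * k)))))
        = (if (r : ℕ) = k - 1 then (1:RatFunc ℚ) else 2)
            * ((1 + XK) ^ (if (r : ℕ) = k - 1 then mch n k r else mch n k r - 1)
            * QK ^ (if (r : ℕ) = k - 1
                then lpk (mch n k r) (fun j => v ((r : ℕ) + 1 + j * k))
                else ipk (mch n k r) (fun j => v ((r : ℕ) + 1 + j * k)))) := by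
    intro r
    have hm : mch n k r = (mch n k r - 1) + 1 := by
      have : 1 ≤ mch n k r := Nat.le_add_left 1 _
      omega
    by_cases hr : (r : ℕ) = k - 1
    · simp only [if_pos hr]
      rw [one_mul]
      calc (∑ δ ∈ (univ : Finset (Fin (mch n k r) → Bool)),
              XK ^ ds 0 (mch n k r) (sw (esgn (mch n k r) δ)
                (fun j => v ((r : ℕ) + 1 + j * k))))
          = GA 0 (mch n k r) (fun j => v ((r : ℕ) + 1 + j * k)) := rfl
        _ = _ := by
            rw [hm, GA0_eq (mch n k r - 1) _ (hchain_pos r) (hchain_dis r), ← hm]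
    · simp only [if_neg hr]
      calc (∑ δ ∈ (univ : Finset (Fin (mch n k r) → Bool)),
              XK ^ dtail (mch n k r) (sw (esgn (mch n k r) δ)
                (fun j => v ((r : ℕ) + 1 + j * k))))
          = GF (mch n k r) (fun j => v ((r : ℕ) + 1 + j * k)) := rfl
        _ = _ := by
            rw [hm, GF_eq (mch n k r - 1) _ (hchain_pos r) (hchain_dis r), ← hm]
  simp only [step3]
  rw [Finset.prod_mul_distrib, Finset.prod_mul_distrib]
  have hc : (∏ r : Fin k, (if (r : ℕ) = k - 1 then (1:RatFunc ℚ) else 2)) = 2 ^ (k - 1) := by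
    have h1 : ∀ r : Fin k, (if (r : ℕ) = k - 1 then (1:RatFunc ℚ) else 2)
        = 2 ^ (if (r : ℕ) = k - 1 then 0 else 1) := by
      intro r
      by_cases hr : (r : ℕ) = k - 1 <;> simp [hr]
    simp only [h1]
    rw [Finset.prod_pow_eq_pow_sum]
    congr 1
    have h2 : (∑ r : Fin k, (if (r : ℕ) = k - 1 then 0 else 1))
        + (∑ r : Fin k, (if (r : ℕ) = k - 1 then 1 else 0)) = k := by
      rw [← Finset.sum_add_distrib]
      have h4 : ∀ r : Fin k, ((if (r : ℕ) = k - 1 then 0 else 1)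
          + (if (r : ℕ) = k - 1 then 1 else 0)) = 1 := by
        intro r
        by_cases hr : (r : ℕ) = k - 1 <;> simp [hr]
      simp only [h4]
      simp
    have h3 : (∑ r : Fin k, (if (r : ℕ) = k - 1 then (1:ℕ) else 0)) = 1 := by
      rw [sum_ite_last k hk (fun _ => (1:ℕ))]
    omega
  have he : (∏ r : Fin k, (1 + XK) ^ (if (r : ℕ) = k - 1 then mch n k r else mch n k r - 1))
      = (1 + XK) ^ (n - k + 1) := by
    rw [Finset.prod_pow_eq_pow_sum]
    congr 1
    have h2 : (∑ r : Fin k, (if (r : ℕ) = k - 1 then mch n k r else mch n k r - 1))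
        + (∑ r : Fin k, (if (r : ℕ) = k - 1 then (0:ℕ) else 1)) = n := by
      rw [← Finset.sum_add_distrib]
      have h5 : ∀ r : Fin k, ((if (r : ℕ) = k - 1 then mch n k r else mch n k r - 1)
          + (if (r : ℕ) = k - 1 then (0:ℕ) else 1)) = mch n k r := by
        intro r
        have : 1 ≤ mch n k r := Nat.le_add_left 1 _
        by_cases hr : (r : ℕ) = k - 1 <;> simp [hr] <;> omega
      rw [Finset.sum_congr rfl (fun r _ => h5 r)]
      exact sum_mch n k hk hkn
    have h3 : (∑ r : Fin k, (if (r : ℕ) = k - 1 then (0:ℕ) else 1))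
        + (∑ r : Fin k, (if (r : ℕ) = k - 1 then (1:ℕ) else 0)) = k := by
      rw [← Finset.sum_add_distrib]
      have h4 : ∀ r : Fin k, ((if (r : ℕ) = k - 1 then (0:ℕ) else 1)
          + (if (r : ℕ) = k - 1 then 1 else 0)) = 1 := by
        intro r
        by_cases hr : (r : ℕ) = k - 1 <;> simp [hr]
      simp only [h4]
      simp
    have h4 : (∑ r : Fin k, (if (r : ℕ) = k - 1 then (1:ℕ) else 0)) = 1 := by
      rw [sum_ite_last k hk (fun _ => (1:ℕ))]
    omega
  have hq : (∏ r : Fin k, QK ^ (if (r : ℕ) = k - 1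
        then lpk (mch n k r) (fun j => v ((r : ℕ) + 1 + j * k))
        else ipk (mch n k r) (fun j => v ((r : ℕ) + 1 + j * k))))
      = QK ^ lpeakk n k (bval n σ (fun _ => false)) := by
    rw [Finset.prod_pow_eq_pow_sum]
    congr 1
    rw [lpeak_eq n k σ]
    rw [GP n k hk hkn (vv n σ) (vv_zero n σ) (vv_pos n σ)]
  rw [hc, he, hq]
  ring

end

end S14

/-- Proposition 23: as rational functions,
`W_{n,k}^{(ℓ)}(4x/(1+x)²) = WB_{n,k}(x) / (2^{k-1}(1+x)^{n-k+1})`. -/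
theorem stmt14 (n k : ℕ) (hn : 1 ≤ n) (hk : 1 ≤ k) (hkn : k ≤ n) :
    ∑ σ : Equiv.Perm (Fin n),
        ((4 * RatFunc.X / (1 + RatFunc.X) ^ 2 : RatFunc ℚ) ^
          lpeakk n k (bval n σ fun _ => false)) =
      (∑ σ : Equiv.Perm (Fin n), ∑ ε : Fin n → Bool,
          (RatFunc.X : RatFunc ℚ) ^ desB n k (bval n σ ε)) /
        (2 ^ (k - 1) * (1 + RatFunc.X) ^ (n - k + 1)) := by
  have hD : ((2:RatFunc ℚ) ^ (k - 1) * (1 + RatFunc.X) ^ (n - k + 1)) ≠ 0 := by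
    apply mul_ne_zero
    · refine pow_ne_zero _ ?_
      have h2 : (2 : RatFunc ℚ) = algebraMap (Polynomial ℚ) (RatFunc ℚ) 2 := by
        rw [map_ofNat]
      rw [h2]
      exact RatFunc.algebraMap_ne_zero (by norm_num)
    · exact pow_ne_zero _ S14.hX1
  rw [eq_div_iff hD, Finset.sum_mul]
  apply Finset.sum_congr rfl
  intro σ _
  have hps := S14.per_sigma n k hn hk hkn σ
  rw [show S14.XK = RatFunc.X from rfl] at hps
  rw [show S14.QK = 4 * RatFunc.X / (1 + RatFunc.X) ^ 2 from rfl] at hps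
  rw [hps]
  ring
end

section
/- For all n ≥ 1, Σ_{p ≥ 0} (2p+1)^n x^p = B_n(x) / (1-x)^{n+1}, where B_n(x) = Σ_{π ∈ B_n} x^{des^B(π)} is the type-B Eulerian polynomial. -/
open Finset

namespace S15

variable {n : ℕ}

def sval (σ : Equiv.Perm (Fin n)) (ε : Fin n → Bool) (k : Fin n) : ℤ :=
  if ε k then -(((σ k : ℕ) : ℤ) + 1) else ((σ k : ℕ) : ℤ) + 1

def word (σ : Equiv.Perm (Fin n)) (ε : Fin n → Bool) (i : ℕ) : ℤ := bval n σ ε (i : ℤ)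

lemma word_zero (σ : Equiv.Perm (Fin n)) (ε : Fin n → Bool) : word σ ε 0 = 0 := by
  simp [word, bval]

lemma word_succ (σ : Equiv.Perm (Fin n)) (ε : Fin n → Bool) {i : ℕ} (h : i < n) :
    word σ ε (i + 1) = sval σ ε ⟨i, h⟩ := by
  have h1 : ((i + 1 : ℕ) : ℤ).natAbs = i + 1 := by push_cast [Int.natAbs_add_of_nonneg]; omega
  rw [word, bval]
  rw [dif_pos (by omega : 1 ≤ ((i+1:ℕ) : ℤ).natAbs ∧ ((i+1:ℕ):ℤ).natAbs ≤ n)]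
  have hs : (((i + 1 : ℕ) : ℤ)).sign = 1 := by
    rw [Int.sign_eq_one_iff_pos]; omega
  rw [hs, one_mul, sval]
  congr 1 <;> congr 1 <;> omega

end S15

namespace S15

variable {n : ℕ}

/-- descent at position `i` (comparing `π(i)` and `π(i+1)`). -/
def dsc (σ : Equiv.Perm (Fin n)) (ε : Fin n → Bool) (i : ℕ) : Prop :=
  word σ ε i > word σ ε (i + 1)

instance (σ : Equiv.Perm (Fin n)) (ε : Fin n → Bool) (i : ℕ) : Decidable (dsc σ ε i) := by
  unfold dsc; infer_instance

def DD (σ : Equiv.Perm (Fin n)) (ε : Fin n → Bool) : Finset ℕ :=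
  (range n).filter (dsc σ ε)

lemma sval_neg_iff (σ : Equiv.Perm (Fin n)) (ε : Fin n → Bool) (k : Fin n) :
    sval σ ε k < 0 ↔ ε k = true := by
  unfold sval; split <;> rename_i h <;> simp [h] <;> omega

lemma dsc_zero_iff (σ : Equiv.Perm (Fin n)) (ε : Fin n → Bool) (hn : 0 < n) :
    dsc σ ε 0 ↔ ε ⟨0, hn⟩ = true := by
  rw [dsc, word_zero, ← sval_neg_iff σ ε ⟨0, hn⟩]
  rw [show (0:ℕ)+1 = 0+1 from rfl, word_succ σ ε hn]


lemma dsc_succ_iff (σ : Equiv.Perm (Fin n)) (ε : Fin n → Bool) {i : ℕ} (h : i + 1 < n) :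
    dsc σ ε (i + 1) ↔ sval σ ε ⟨i, by omega⟩ > sval σ ε ⟨i + 1, h⟩ := by
  rw [dsc, word_succ σ ε (by omega : i < n), word_succ σ ε h]

/-- explicit description of a positive-position descent. -/
lemma dsc_succ_iff' (σ : Equiv.Perm (Fin n)) (ε : Fin n → Bool) {i : ℕ} (h : i + 1 < n) :
    dsc σ ε (i + 1) ↔
      ((ε ⟨i, by omega⟩ = false ∧ ε ⟨i+1, h⟩ = true) ∨
       (ε ⟨i, by omega⟩ = false ∧ ε ⟨i+1, h⟩ = false ∧
         (σ ⟨i+1, h⟩ : ℕ) < (σ ⟨i, by omega⟩ : ℕ)) ∨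
       (ε ⟨i, by omega⟩ = true ∧ ε ⟨i+1, h⟩ = true ∧
         (σ ⟨i, by omega⟩ : ℕ) < (σ ⟨i+1, h⟩ : ℕ))) := by
  rw [dsc_succ_iff σ ε h]
  unfold sval
  cases h1 : ε ⟨i, by omega⟩ <;> cases h2 : ε ⟨i+1, h⟩ <;> simp <;> omega

end S15

namespace S15

variable {n : ℕ}

/-- sorting key: primary = |f j|, secondary encodes sign and position. -/
def key (f : Fin n → ℤ) (j : Fin n) : ℕ :=
  (f j).natAbs * (2 * n) + (if f j < 0 then (n - 1) - (j : ℕ) else n + (j : ℕ))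

lemma key_snd_lt (f : Fin n → ℤ) (j : Fin n) :
    (if f j < 0 then (n - 1) - (j : ℕ) else n + (j : ℕ)) < 2 * n := by
  have := j.2; split <;> omega

lemma mulAdd_lt_iff {M a a' s s' : ℕ} (hs : s < M) (hs' : s' < M) :
    a * M + s < a' * M + s' ↔ (a < a' ∨ (a = a' ∧ s < s')) := by
  rcases Nat.lt_trichotomy a a' with h | h | h
  · refine iff_of_true ?_ (Or.inl h)
    calc a * M + s < a * M + M := by omega
    _ = (a + 1) * M := by ring
    _ ≤ a' * M := Nat.mul_le_mul_right M h
    _ ≤ a' * M + s' := Nat.le_add_right _ _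
  · subst h; simp [Nat.add_lt_add_iff_left, lt_irrefl]
  · refine iff_of_false ?_ (by omega)
    have : (a' + 1) * M ≤ a * M := Nat.mul_le_mul_right M h
    have : a' * M + M ≤ a * M := by linarith [this]; 
    omega

lemma key_lt_iff (f : Fin n → ℤ) (j j' : Fin n) :
    key f j < key f j' ↔
      ((f j).natAbs < (f j').natAbs ∨
        ((f j).natAbs = (f j').natAbs ∧
          (if f j < 0 then (n - 1) - (j : ℕ) else n + (j : ℕ)) <
          (if f j' < 0 then (n - 1) - (j' : ℕ) else n + (j' : ℕ)))) :=
  mulAdd_lt_iff (key_snd_lt f j) (key_snd_lt f j')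

lemma key_injective (f : Fin n → ℤ) : Function.Injective (key f) := by
  intro j j' h
  have h1 := key_snd_lt f j
  have h2 := key_snd_lt f j'
  have hj := j.2
  have hj' := j'.2
  have hlt := (key_lt_iff f j j').not.mp (by omega)
  have hlt' := (key_lt_iff f j' j).not.mp (by omega)
  have hsnd : (if f j < 0 then (n - 1) - (j : ℕ) else n + (j : ℕ)) =
      (if f j' < 0 then (n - 1) - (j' : ℕ) else n + (j' : ℕ)) := by omega
  apply Fin.ext
  split at hsnd <;> split at hsnd <;> omega

/-- compatibility of `f` with the signed permutation `(σ, ε)`. -/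
def Compat (σ : Equiv.Perm (Fin n)) (ε : Fin n → Bool) (f : Fin n → ℤ) : Prop :=
  StrictMono (fun k => key f (σ k)) ∧ ∀ k, ε k = decide (f (σ k) < 0)

instance (σ : Equiv.Perm (Fin n)) (ε : Fin n → Bool) (f : Fin n → ℤ) :
    Decidable (Compat σ ε f) :=
  instDecidableAnd (dp := decidable_of_iff (∀ a b : Fin n, a < b → key f (σ a) < key f (σ b))
    ⟨fun h _ _ hab => h _ _ hab, fun h _ _ hab => h hab⟩) (dq := inferInstance)

end S15

namespace S15

variable {n : ℕ}

/-- number of descents at positions `< m`. -/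
def rr (σ : Equiv.Perm (Fin n)) (ε : Fin n → Bool) (m : ℕ) : ℕ :=
  ((range m).filter (dsc σ ε)).card

lemma rr_succ (σ : Equiv.Perm (Fin n)) (ε : Fin n → Bool) (m : ℕ) :
    rr σ ε (m + 1) = if dsc σ ε m then rr σ ε m + 1 else rr σ ε m := by
  unfold rr
  rw [range_add_one, filter_insert]
  split
  · rw [card_insert_of_notMem (by simp)]
  · rfl

lemma rr_n (σ : Equiv.Perm (Fin n)) (ε : Fin n → Bool) : rr σ ε n = (DD σ ε).card := rfl

lemma rr_le (σ : Equiv.Perm (Fin n)) (ε : Fin n → Bool) {m m' : ℕ} (h : m ≤ m') :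
    rr σ ε m ≤ rr σ ε m' :=
  card_le_card (filter_subset_filter _ (by simpa using h))

lemma card_DD_le (σ : Equiv.Perm (Fin n)) (ε : Fin n → Bool) : (DD σ ε).card ≤ n :=
  le_trans (card_le_card (filter_subset _ _)) (by simp)

lemma rr_tail (σ : Equiv.Perm (Fin n)) (ε : Fin n → Bool) {k : ℕ} (hk : k < n) :
    (DD σ ε).card ≤ rr σ ε (k + 1) + (n - 1 - k) := by
  have hsub : DD σ ε ⊆ (range (k+1)).filter (dsc σ ε) ∪ Ico (k+1) n := by
    intro x hx
    simp only [DD, mem_filter, mem_range] at hx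
    by_cases hxk : x < k + 1
    · exact mem_union_left _ (by simp [mem_filter, hxk, hx.2])
    · exact mem_union_right _ (by simp [mem_Ico]; omega)
  calc (DD σ ε).card ≤ _ := card_le_card hsub
  _ ≤ rr σ ε (k+1) + (Ico (k+1) n).card := card_union_le _ _
  _ = rr σ ε (k+1) + (n - 1 - k) := by rw [Nat.card_Ico]; congr 1; omega

/-- if `ε k = true`, there is a descent at a position `≤ k`, hence `rr (k+1) ≥ 1`. -/
lemma one_le_rr_of_eps (σ : Equiv.Perm (Fin n)) (ε : Fin n → Bool) (k : Fin n)
    (hk : ε k = true) : 1 ≤ rr σ ε ((k : ℕ) + 1) := by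
  induction' hi : (k : ℕ) with i IH generalizing k
  · -- k = 0 : descent at position 0
    have h0 : dsc σ ε 0 := by
      rw [dsc_zero_iff σ ε k.pos]
      convert hk using 2
      exact (Fin.ext hi.symm : (⟨0, k.pos⟩ : Fin n) = k)
    rw [rr_succ]
    simp [h0]
  · by_cases he : ε ⟨i, by omega⟩ = true
    · have := IH ⟨i, by omega⟩ he rfl
      have := rr_le σ ε (by omega : i + 1 ≤ i + 1 + 1)
      omega
    · -- ε at i is false, ε at i+1 true: descent at i+1
      have hd : dsc σ ε (i + 1) := by
        rw [dsc_succ_iff' σ ε (by omega : i + 1 < n)]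
        left
        refine ⟨by simpa using he, ?_⟩
        convert hk using 2
        exact (Fin.ext hi.symm : (⟨i+1, _⟩ : Fin n) = k)
      rw [hi] at *
      rw [rr_succ]
      simp [hd]

end S15

namespace S15

variable {n : ℕ}

lemma compat_sign {σ : Equiv.Perm (Fin n)} {ε : Fin n → Bool} {f : Fin n → ℤ}
    (h : Compat σ ε f) (k : Fin n) : ε k = true ↔ f (σ k) < 0 := by
  rw [h.2 k]; simp

lemma chain_zero {σ : Equiv.Perm (Fin n)} {ε : Fin n → Bool} {f : Fin n → ℤ}
    (h : Compat σ ε f) (hn : 0 < n) (h0 : dsc σ ε 0) : 1 ≤ (f (σ ⟨0, hn⟩)).natAbs := by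
  rw [dsc_zero_iff σ ε hn] at h0
  have := (compat_sign h ⟨0, hn⟩).mp h0
  omega

lemma chain_mono {σ : Equiv.Perm (Fin n)} {ε : Fin n → Bool} {f : Fin n → ℤ}
    (h : Compat σ ε f) {i : ℕ} (hi : i + 1 < n) :
    (f (σ ⟨i, by omega⟩)).natAbs ≤ (f (σ ⟨i+1, hi⟩)).natAbs ∧
      (dsc σ ε (i+1) → (f (σ ⟨i, by omega⟩)).natAbs < (f (σ ⟨i+1, hi⟩)).natAbs) := by
  have hlt := h.1 (show (⟨i, by omega⟩ : Fin n) < ⟨i+1, hi⟩ by simp)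
  rw [key_lt_iff] at hlt
  constructor
  · omega
  · intro hd
    rcases hlt with hlt | ⟨heq, hsnd⟩
    · exact hlt
    · exfalso
      rw [dsc_succ_iff' σ ε hi] at hd
      have e1 := h.2 ⟨i, by omega⟩
      have e2 := h.2 ⟨i+1, hi⟩
      have b1 := (σ ⟨i, by omega⟩).2
      have b2 := (σ ⟨i+1, hi⟩).2
      rcases hd with ⟨hf, ht⟩ | ⟨hf1, hf2, hlt'⟩ | ⟨ht1, ht2, hlt'⟩
      · have hn1 : ¬ (f (σ ⟨i, by omega⟩) < 0) := by
          rw [← compat_sign h]; simp [hf]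
        have hp2 : f (σ ⟨i+1, hi⟩) < 0 := (compat_sign h _).mp ht
        rw [if_neg hn1, if_pos hp2] at hsnd
        omega
      · have hn1 : ¬ (f (σ ⟨i, by omega⟩) < 0) := by
          rw [← compat_sign h]; simp [hf1]
        have hn2 : ¬ (f (σ ⟨i+1, hi⟩) < 0) := by
          rw [← compat_sign h]; simp [hf2]
        rw [if_neg hn1, if_neg hn2] at hsnd
        omega
      · have hp1 : f (σ ⟨i, by omega⟩) < 0 := (compat_sign h _).mp ht1
        have hp2 : f (σ ⟨i+1, hi⟩) < 0 := (compat_sign h _).mp ht2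
        rw [if_pos hp1, if_pos hp2] at hsnd
        omega

end S15

namespace S15

variable {n : ℕ}

lemma strictMono_of_adj {α : Type*} [Preorder α] {g : Fin n → α}
    (h : ∀ i (hi : i + 1 < n), g ⟨i, by omega⟩ < g ⟨i+1, hi⟩) : StrictMono g := by
  intro a b hab
  have hb := b.2
  obtain ⟨c, hc⟩ : ∃ c, (b : ℕ) = (a : ℕ) + 1 + c := ⟨(b : ℕ) - (a : ℕ) - 1, by omega⟩
  clear hab
  induction' c with c IH generalizing b
  · have := h (a : ℕ) (show (a:ℕ)+1 < n by omega)
    convert this using 2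
    exact Fin.ext (by simp [hc])
  · have hb' : (a:ℕ) + 1 + c < n := by omega
    have step : g a < g ⟨(a:ℕ)+1+c, hb'⟩ :=
      IH (b := ⟨(a:ℕ)+1+c, hb'⟩) (by simpa using hb') (by simp)
    calc g a < g ⟨(a:ℕ)+1+c, hb'⟩ := step
    _ < g b := by
        have := h ((a:ℕ)+1+c) (show (a:ℕ)+1+c+1 < n by omega)
        convert this using 2
        exact Fin.ext (by simp [hc]; omega)

lemma rr_le_natAbs {σ : Equiv.Perm (Fin n)} {ε : Fin n → Bool} {f : Fin n → ℤ}
    (h : Compat σ ε f) (k : Fin n) : rr σ ε ((k : ℕ) + 1) ≤ (f (σ k)).natAbs := by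
  induction' hi : (k : ℕ) with i IH generalizing k
  · have hk : (⟨0, k.pos⟩ : Fin n) = k := Fin.ext (by simp [hi])
    rw [rr_succ]
    have hr0 : rr σ ε 0 = 0 := by simp [rr]
    split <;> rename_i hd
    · have := chain_zero h k.pos hd
      rw [hk] at this
      omega
    · omega
  · have hi' : i + 1 < n := by have := k.2; omega
    have hk : (⟨i+1, hi'⟩ : Fin n) = k := Fin.ext (by simp [hi])
    have hprev := IH ⟨i, by omega⟩ rfl
    have hmono := chain_mono h hi'
    rw [hk] at hmono
    rw [rr_succ]
    split <;> rename_i hd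
    · have := hmono.2 hd
      omega
    · have := hmono.1
      omega

lemma compat_of_chain (σ : Equiv.Perm (Fin n)) (ε : Fin n → Bool) (f : Fin n → ℤ)
    (hsign : ∀ k, ε k = decide (f (σ k) < 0))
    (hmono : ∀ i (hi : i + 1 < n),
      (f (σ ⟨i, by omega⟩)).natAbs ≤ (f (σ ⟨i+1, hi⟩)).natAbs ∧
        ((f (σ ⟨i, by omega⟩)).natAbs = (f (σ ⟨i+1, hi⟩)).natAbs → ¬ dsc σ ε (i+1))) :
    Compat σ ε f := by
  refine ⟨strictMono_of_adj fun i hi => ?_, hsign⟩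
  have hsign' : ∀ k, ε k = true ↔ f (σ k) < 0 := fun k => by rw [hsign k]; simp
  rw [key_lt_iff]
  rcases Nat.lt_or_ge (f (σ ⟨i, by omega⟩)).natAbs (f (σ ⟨i+1, hi⟩)).natAbs with hlt | hge
  · exact Or.inl hlt
  · have heq : (f (σ ⟨i, by omega⟩)).natAbs = (f (σ ⟨i+1, hi⟩)).natAbs := by
      have := (hmono i hi).1; omega
    have hnd : ¬ dsc σ ε (i+1) := (hmono i hi).2 heq
    rw [dsc_succ_iff' σ ε hi] at hnd
    push_neg at hnd
    refine Or.inr ⟨heq, ?_⟩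
    have hne : (σ ⟨i, by omega⟩ : ℕ) ≠ (σ ⟨i+1, hi⟩ : ℕ) := by
      intro hc
      have : (⟨i, by omega⟩ : Fin n) = ⟨i+1, hi⟩ := σ.injective (Fin.ext hc)
      simp at this
    have b1 := (σ ⟨i, by omega⟩).2
    have b2 := (σ ⟨i+1, hi⟩).2
    by_cases h1 : ε ⟨i, by omega⟩ = true <;> by_cases h2 : ε ⟨i+1, hi⟩ = true
    · -- both negative
      have hp1 := (hsign' _).mp h1
      have hp2 := (hsign' _).mp h2
      rw [if_pos hp1, if_pos hp2]
      have := hnd.2.2 h1 h2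
      omega
    · -- neg, pos
      have hp1 := (hsign' _).mp h1
      have hp2 : ¬ f (σ ⟨i+1, hi⟩) < 0 := fun hc => h2 ((hsign' _).mpr hc)
      rw [if_pos hp1, if_neg hp2]
      omega
    · -- pos, neg : this is always a descent, contradiction
      exfalso
      exact (hnd.1 (by simpa using h1)) (by simpa using h2)
    · -- both positive
      have hp1 : ¬ f (σ ⟨i, by omega⟩) < 0 := fun hc => h1 ((hsign' _).mpr hc)
      have hp2 : ¬ f (σ ⟨i+1, hi⟩) < 0 := fun hc => h2 ((hsign' _).mpr hc)
      rw [if_neg hp1, if_neg hp2]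
      have := hnd.2.1 (by simpa using h1) (by simpa using h2)
      omega

end S15

namespace S15

variable {n : ℕ}

/-- the set of strictly increasing `n`-tuples with entries `< N`. -/
def SS (n N : ℕ) : Finset (Fin n → ℕ) :=
  (Fintype.piFinset fun _ : Fin n => range N).filter
    (fun s => ∀ a b : Fin n, a < b → s a < s b)

lemma mem_SS_iff {N : ℕ} {s : Fin n → ℕ} :
    s ∈ SS n N ↔ (∀ k, s k < N) ∧ StrictMono s := by
  constructor
  · intro hs
    rw [SS, mem_filter, Fintype.mem_piFinset] at hs
    exact ⟨fun k => by have := hs.1 k; rwa [mem_range] at this,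
      fun a b hab => hs.2 a b hab⟩
  · intro ⟨h1, h2⟩
    rw [SS, mem_filter, Fintype.mem_piFinset]
    exact ⟨fun k => mem_range.mpr (h1 k), fun a b hab => h2 hab⟩

lemma card_SS (N : ℕ) : (SS n N).card = N.choose n := by
  rw [show N.choose n = ((range N).powersetCard n).card by
    rw [card_powersetCard, card_range]]
  refine card_bij' (fun s _ => image s univ)
    (fun A hA => fun k => A.orderEmbOfFin (by rw [(mem_powersetCard.mp hA).2]) k)
    ?_ ?_ ?_ ?_
  · -- maps into powersetCard
    intro s hs
    rw [mem_SS_iff] at hs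
    rw [mem_powersetCard]
    constructor
    · intro x hx
      rcases mem_image.mp hx with ⟨k, _, rfl⟩
      exact mem_range.mpr (hs.1 k)
    · rw [card_image_of_injective _ hs.2.injective, card_univ, Fintype.card_fin]
  · -- maps into SS
    intro A hA
    rw [mem_SS_iff]
    refine ⟨fun k => ?_, fun a b hab => (A.orderEmbOfFin _).strictMono hab⟩
    have h1 := orderEmbOfFin_mem A (by rw [(mem_powersetCard.mp hA).2]) k
    have h2 := (mem_powersetCard.mp hA).1 h1
    rwa [mem_range] at h2
  · -- left inverse
    intro s hs
    rw [mem_SS_iff] at hs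
    have hcard : (image s univ).card = n := by
      rw [card_image_of_injective _ hs.2.injective, card_univ, Fintype.card_fin]
    have := orderEmbOfFin_unique hcard (f := s)
      (fun x => mem_image_of_mem s (mem_univ x)) hs.2
    exact funext fun k => (congrFun this k).symm
  · -- right inverse
    intro A hA
    have hcard : A.card = n := (mem_powersetCard.mp hA).2
    apply coe_injective
    rw [coe_image, coe_univ, Set.image_univ]
    exact range_orderEmbOfFin A (by rw [hcard])

end S15

namespace S15

variable {n : ℕ}

lemma sm_gap {s : Fin n → ℕ} (hs : StrictMono s) (i j : Fin n) (hij : i ≤ j) :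
    s i + ((j : ℕ) - (i : ℕ)) ≤ s j := by
  obtain ⟨c, hc⟩ : ∃ c, (j : ℕ) = (i : ℕ) + c := ⟨(j:ℕ) - (i:ℕ), by omega⟩
  induction' c with c IH generalizing j
  · have : j = i := Fin.ext (by omega)
    subst this; omega
  · have hb' : (i:ℕ) + c < n := by have := j.2; omega
    have h1 := IH ⟨(i:ℕ)+c, hb'⟩ (Fin.le_def.mpr (by simp)) (by simp)
    have h2 : s ⟨(i:ℕ)+c, hb'⟩ < s j := hs (Fin.lt_def.mpr (by simp; omega))
    simp only [Fin.val_mk] at h1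
    omega

lemma sm_le_apply {s : Fin n → ℕ} (hs : StrictMono s) (k : Fin n) : (k : ℕ) ≤ s k := by
  have := sm_gap hs ⟨0, k.pos⟩ k (Fin.le_def.mpr (by simp))
  simp only [Fin.val_mk] at this
  omega

/-- the "function" side. -/
noncomputable def FF (n p : ℕ) : Finset (Fin n → ℤ) :=
  Fintype.piFinset fun _ : Fin n => Finset.Icc (-(p:ℤ)) (p:ℤ)

noncomputable def Fib (σ : Equiv.Perm (Fin n)) (ε : Fin n → Bool) (p : ℕ) : Finset (Fin n → ℤ) :=
  (FF n p).filter (Compat σ ε)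

lemma card_Fib (σ : Equiv.Perm (Fin n)) (ε : Fin n → Bool) (p : ℕ) :
    (Fib σ ε p).card = (n + p - (DD σ ε).card).choose n := by
  rw [← card_SS (n + p - (DD σ ε).card)]
  refine card_bij'
    (fun f _ => fun k => (f (σ k)).natAbs + (k : ℕ) - rr σ ε ((k : ℕ) + 1))
    (fun s _ => fun j => (if ε (σ.symm j) = true then (-1 : ℤ) else 1) *
      ((s (σ.symm j) + rr σ ε (((σ.symm j) : ℕ) + 1) - ((σ.symm j) : ℕ) : ℕ) : ℤ))
    ?_ ?_ ?_ ?_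
  · -- forward map lands in SS
    intro f hf
    rw [Fib, mem_filter] at hf
    obtain ⟨hmem, hcompat⟩ := hf
    rw [FF, Fintype.mem_piFinset] at hmem
    have habs : ∀ k : Fin n, (f (σ k)).natAbs ≤ p := by
      intro k
      have := hmem (σ k)
      rw [Finset.mem_Icc] at this
      omega
    rw [mem_SS_iff]
    constructor
    · intro k
      have h1 := rr_le_natAbs hcompat k
      have h2 := rr_tail σ ε k.2
      have h3 := rr_le σ ε (show (k:ℕ)+1 ≤ n by have := k.2; omega)
      rw [rr_n] at h3
      have := habs k
      have := k.2
      omega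
    · apply strictMono_of_adj
      intro i hi
      dsimp only
      have hmono := chain_mono hcompat hi
      have h1 := rr_le_natAbs hcompat ⟨i, by omega⟩
      have h2 := rr_le_natAbs hcompat ⟨i+1, hi⟩
      have h3 := rr_succ σ ε (i+1)
      simp only [Fin.val_mk] at h1 h2 ⊢
      split at h3 <;> rename_i hd
      · have := hmono.2 hd
        omega
      · have := hmono.1
        omega
  · -- backward map lands in Fib
    intro s hs
    rw [mem_SS_iff] at hs
    obtain ⟨hlt, hsm⟩ := hs
    have hd_le : (DD σ ε).card ≤ n := card_DD_le σ ε
    have hb_le : ∀ k : Fin n, s k + rr σ ε ((k:ℕ)+1) - (k:ℕ) ≤ p := by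
      intro k
      have hk := k.2
      have hgap := sm_gap hsm k ⟨n-1, by omega⟩ (Fin.le_def.mpr (by simp; omega))
      have h1 := hlt ⟨n-1, by omega⟩
      have h2 := rr_le σ ε (show (k:ℕ)+1 ≤ n by omega)
      rw [rr_n] at h2
      simp only [Fin.val_mk] at hgap h1
      omega
    have hk_le : ∀ k : Fin n, (k:ℕ) ≤ s k := sm_le_apply hsm
    rw [Fib, mem_filter]
    constructor
    · rw [FF, Fintype.mem_piFinset]
      intro j
      rw [Finset.mem_Icc]
      have h1 := hb_le (σ.symm j)
      have h2 := hk_le (σ.symm j)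
      split <;> constructor <;> push_cast <;> omega
    · apply compat_of_chain
      · intro k
        simp only [Equiv.symm_apply_apply]
        have h2 := hk_le k
        cases he : ε k
        · simp only [Bool.false_eq, decide_eq_false_iff_not, not_lt]
          push_cast
          omega
        · have hrr := one_le_rr_of_eps σ ε k he
          have hpos : (0:ℤ) < ((s k + rr σ ε ((k:ℕ)+1) - (k:ℕ) : ℕ) : ℤ) := by
            push_cast; omega
          simp
          omega
      · intro i hi
        simp only [Equiv.symm_apply_apply, Fin.val_mk]
        have hsm' := hsm (show (⟨i, by omega⟩ : Fin n) < ⟨i+1, hi⟩ from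
          Fin.lt_def.mpr (by simp))
        have h3 := rr_succ σ ε (i+1)
        have h1 := hk_le ⟨i, by omega⟩
        have h2 := hk_le ⟨i+1, hi⟩
        have hr1 := rr_le σ ε (show i+1 ≤ i+1+1 by omega)
        simp only [Fin.val_mk] at hsm' h1 h2
        have habs : ∀ (e : Bool) (m : ℕ),
            (((if e = true then (-1:ℤ) else 1) * (m : ℤ))).natAbs = m := by
          intro e m; cases e <;> simp
        rw [habs, habs]
        split at h3 <;> rename_i hd
        · exact ⟨by omega, fun heq => by omega⟩
        · exact ⟨by omega, fun _ => hd⟩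
  · -- left inverse
    intro f hf
    rw [Fib, mem_filter] at hf
    obtain ⟨hmem, hcompat⟩ := hf
    funext j
    dsimp only
    have h1 := rr_le_natAbs hcompat (σ.symm j)
    simp only [Equiv.apply_symm_apply] at h1
    simp only [Equiv.apply_symm_apply]
    have heq : (f j).natAbs + ((σ.symm j : ℕ)) - rr σ ε ((σ.symm j : ℕ) + 1)
        + rr σ ε ((σ.symm j : ℕ) + 1) - (σ.symm j : ℕ) = (f j).natAbs := by
      omega
    rw [heq]
    have hsgn := hcompat.2 (σ.symm j)
    simp only [Equiv.apply_symm_apply] at hsgn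
    by_cases hsg : f j < 0
    · have ht : ε (σ.symm j) = true := by rw [hsgn]; simp [hsg]
      rw [if_pos ht]
      omega
    · have ht : ε (σ.symm j) = false := by rw [hsgn]; simp [hsg]
      rw [if_neg (by simp [ht])]
      omega
  · -- right inverse
    intro s hs
    rw [mem_SS_iff] at hs
    obtain ⟨hlt, hsm⟩ := hs
    funext k
    dsimp only
    simp only [Equiv.symm_apply_apply]
    have habs : ∀ (e : Bool) (m : ℕ),
        (((if e = true then (-1:ℤ) else 1) * (m : ℤ))).natAbs = m := by
      intro e m; cases e <;> simp
    rw [habs]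
    have h2 := sm_le_apply hsm k
    omega

end S15

namespace S15

variable {n : ℕ}

lemma card_FF (p : ℕ) : (FF n p).card = (2 * p + 1) ^ n := by
  rw [FF, Fintype.card_piFinset]
  have : (Finset.Icc (-(p:ℤ)) (p:ℤ)).card = 2 * p + 1 := by
    rw [Int.card_Icc]
    omega
  simp [this]

lemma fiber_eq (σ : Equiv.Perm (Fin n)) (ε : Fin n → Bool) (p : ℕ) :
    (FF n p).filter (fun f => ((Tuple.sort (key f) : Equiv.Perm (Fin n)),
      (fun k => decide (f (Tuple.sort (key f) k) < 0))) = (σ, ε)) = Fib σ ε p := by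
  ext f
  simp only [mem_filter, Fib, Prod.mk.injEq]
  constructor
  · rintro ⟨hf, hσ, hε⟩
    refine ⟨hf, ?_, fun k => ?_⟩
    · subst hσ
      exact (Tuple.monotone_sort (key f)).strictMono_of_injective
        ((key_injective f).comp (Equiv.injective _))
    · subst hσ
      exact (congrFun hε k).symm
  · rintro ⟨hf, hsm, hsgn⟩
    have hσ : σ = Tuple.sort (key f) := by
      rw [Tuple.eq_sort_iff]
      exact ⟨hsm.monotone, fun i j hij hkeq => absurd hkeq (ne_of_lt (hsm hij))⟩
    refine ⟨hf, hσ.symm, ?_⟩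
    subst hσ
    exact funext fun k => (hsgn k).symm

lemma sum_card_Fib (p : ℕ) :
    ∑ σ : Equiv.Perm (Fin n), ∑ ε : Fin n → Bool, (Fib σ ε p).card = (2 * p + 1) ^ n := by
  classical
  rw [← card_FF (n := n) p]
  rw [Finset.card_eq_sum_card_fiberwise
    (f := fun f : Fin n → ℤ => ((Tuple.sort (key f) : Equiv.Perm (Fin n)),
      (fun k => decide (f (Tuple.sort (key f) k) < 0))))
    (t := (univ : Finset (Equiv.Perm (Fin n) × (Fin n → Bool)))) (fun _ _ => mem_univ _)]
  rw [Fintype.sum_prod_type]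
  exact Finset.sum_congr rfl fun σ _ => Finset.sum_congr rfl fun ε _ => by
    rw [fiber_eq]

lemma count (p : ℕ) :
    ∑ σ : Equiv.Perm (Fin n), ∑ ε : Fin n → Bool,
      ((n + p - (DD σ ε).card).choose n) = (2 * p + 1) ^ n := by
  rw [← sum_card_Fib p]
  exact Finset.sum_congr rfl fun σ _ => Finset.sum_congr rfl fun ε _ =>
    (card_Fib σ ε p).symm

lemma ps_aux (d : ℕ) (hn : 0 < n) :
    (PowerSeries.mk fun p => ((n + p - d).choose n : ℤ)) * (1 - PowerSeries.X) ^ (n + 1) =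
      PowerSeries.X ^ d := by
  have h1 : (PowerSeries.mk fun p => ((n + p - d).choose n : ℤ)) =
      PowerSeries.X ^ d * PowerSeries.mk fun p => ((n + p).choose n : ℤ) := by
    ext m
    rw [PowerSeries.coeff_mk, PowerSeries.coeff_X_pow_mul']
    split <;> rename_i h
    · rw [PowerSeries.coeff_mk]
      congr 2
      omega
    · have : n + m - d < n := by omega
      rw [Nat.choose_eq_zero_of_lt this]
      simp
  rw [h1, mul_assoc]
  have h2 : (PowerSeries.mk fun p => ((n + p).choose n : ℤ)) *
      (1 - PowerSeries.X) ^ (n + 1) = 1 := by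
    have hv := (PowerSeries.invOneSubPow ℤ (n + 1)).val_inv
    rw [PowerSeries.invOneSubPow_val_succ_eq_mk_add_choose,
      PowerSeries.invOneSubPow_inv_eq_one_sub_pow] at hv
    exact hv
  rw [h2, mul_one]

end S15

namespace S15

variable {n : ℕ}

lemma desB_eq (σ : Equiv.Perm (Fin n)) (ε : Fin n → Bool) (hn : 1 ≤ n) :
    desB n 1 (bval n σ ε) = (DD σ ε).card := by
  rw [desB, DD]
  rw [show n - 1 + 1 = n by omega]
  congr 1

end S15


/-- Stembridge: `Σ_{p ≥ 0} (2p+1)^n x^p = B_n(x)/(1-x)^{n+1}`,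
as an identity of formal power series (denominator cleared). -/
theorem stmt15 (n : ℕ) (hn : 1 ≤ n) :
    PowerSeries.mk (fun p => ((2 * p + 1) ^ n : ℤ)) * (1 - PowerSeries.X) ^ (n + 1) =
      ∑ σ : Equiv.Perm (Fin n), ∑ ε : Fin n → Bool,
        PowerSeries.X ^ desB n 1 (bval n σ ε) := by
  have hmk : (PowerSeries.mk fun p => ((2 * p + 1) ^ n : ℤ)) =
      ∑ σ : Equiv.Perm (Fin n), ∑ ε : Fin n → Bool,
        PowerSeries.mk fun p => (((n + p - (S15.DD σ ε).card).choose n : ℕ) : ℤ) := by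
    ext m
    simp only [map_sum, PowerSeries.coeff_mk]
    exact_mod_cast (S15.count m).symm
  rw [hmk, Finset.sum_mul]
  refine Finset.sum_congr rfl fun σ _ => ?_
  rw [Finset.sum_mul]
  refine Finset.sum_congr rfl fun ε _ => ?_
  rw [S15.ps_aux _ (by omega), S15.desB_eq σ ε hn]
end

section
/- For every signed permutation π ∈ B_n, with the interleaved decomposition ψ(π) = (π_1, …, π_k) into standardized subsequences (π_i = std γ_{n,k}^i(π)), the width-k type-B descent number decomposes as des_k^B(π) = des^B(π_k) + Σ_{i=1}^{k-1} des^A(π_i). -/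
open Finset

/-- Length of the `i`-th interleaved subsequence (positions `i, i+k, …` in `[n]`). -/
def subLen (n k i : ℕ) : ℕ := (n - i) / k + 1

/-- The standardization `std γ_{n,k}^i(π)` of the `i`-th interleaved subsequence of `π`,
as a value function: the `m`-th entry (for `1 ≤ m ≤ subLen n k i`) is the sign of
`π(i + (m-1)k)` times the rank of its absolute value among the subsequence. -/
def stdSub (n k i : ℕ) (π : ℤ → ℤ) : ℤ → ℤ := fun m =>
  if 1 ≤ m ∧ m ≤ (subLen n k i : ℤ) then
    (π ((i : ℤ) + (m - 1) * k)).sign *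
      (1 + (((Finset.Icc 1 (subLen n k i)).filter fun m' : ℕ =>
        |π ((i : ℤ) + ((m' : ℤ) - 1) * k)| < |π ((i : ℤ) + (m - 1) * k)|).card : ℤ))
  else 0

/-!
The descent at position 0 occurs exactly when `π(k) < 0`. Since `π(0) = 0` and the first entry
of `π_k` has the sign of `π(k)`, this is also the descent at position 0 of `π_k`. Each remaining
descent `π(i) > π(i+k)`, `1 ≤ i ≤ n - k`, compares two consecutive entries of the interleaved
subsequence containing `i`, which is determined by `i` mod `k`. Standardization keeps signs and replaces
absolute values by their ranks, so it preserves the relative order of nonzero entries: the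
descents in the class of `r` are exactly the type-A descents of `π_r`.
-/

lemma card_filter_lt_lt_card_filter_lt_iff {α β : Type*} [LinearOrder β] {s : Finset α}
    {g : α → β} {a : α} (ha : a ∈ s) (y : β) :
    #{x ∈ s | g x < g a} < #{x ∈ s | g x < y} ↔ g a < y := by
  constructor
  · intro h
    by_contra! hy
    exact h.not_ge (card_le_card (monotone_filter_right s fun _ _ hx => hx.trans_le hy))
  · intro hy
    refine card_lt_card ((ssubset_iff_of_subset
      (monotone_filter_right s fun _ _ hx => hx.trans hy)).2 ⟨a, ?_, ?_⟩) <;> simp [ha, hy]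

lemma sign_mul_lt_sign_mul_iff {a b ra rb : ℤ} (ha : a ≠ 0) (hb : b ≠ 0)
    (hra : 0 < ra) (hrb : 0 < rb) (hab : |a| < |b| ↔ ra < rb) (hba : |b| < |a| ↔ rb < ra) :
    a.sign * ra < b.sign * rb ↔ a < b := by
  rcases ha.lt_or_gt with ha | ha <;> rcases hb.lt_or_gt with hb | hb <;>
    simp only [Int.sign_eq_neg_one_of_neg, Int.sign_eq_one_of_pos, abs_of_neg, abs_of_pos,
      ha, hb] at hab hba ⊢ <;> omega

lemma card_filter_Icc_eq_sum_residues (P : ℕ → Prop) [DecidablePred P] {n k : ℕ} (hk : 0 < k) :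
    #{i ∈ Icc 1 (n - k) | P i} =
      ∑ r ∈ Icc 1 k, #{m ∈ Icc 1 ((n - r) / k) | P (r + (m - 1) * k)} := by
  -- `i ↔ (r, m)` is division with remainder: `i - 1 = (r - 1) + (m - 1) * k`.
  rw [← card_sigma]
  symm
  refine card_nbij' (fun x => x.1 + (x.2 - 1) * k) (fun i => ⟨(i - 1) % k + 1, (i - 1) / k + 1⟩)
    ?_ ?_ ?_ ?_
  · rintro ⟨r, m⟩ h
    simp only [mem_coe, mem_sigma, mem_filter, mem_Icc, Nat.le_div_iff_mul_le hk] at h ⊢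
    have hkm : k ≤ m * k := Nat.le_mul_of_pos_left k h.2.1.1
    have hsub := Nat.sub_one_mul m k
    exact ⟨by omega, h.2.2⟩
  · intro i h
    simp only [mem_coe, mem_sigma, mem_filter, mem_Icc, Nat.le_div_iff_mul_le hk,
      Nat.add_sub_cancel] at h ⊢
    have hdiv := Nat.mod_add_div' (i - 1) k
    have hmod := Nat.mod_lt (i - 1) hk
    generalize (i - 1) / k = q at hdiv ⊢
    refine ⟨by omega, ⟨by omega, by rw [Nat.succ_mul]; omega⟩, ?_⟩
    convert h.2 using 1
    omega
  · rintro ⟨r, m⟩ h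
    simp only [mem_coe, mem_sigma, mem_filter, mem_Icc] at h
    have hdm := (Nat.div_mod_unique hk (a := r + (m - 1) * k - 1) (d := m - 1) (c := r - 1)).2
      ⟨by rw [mul_comm]; omega, by omega⟩
    simp only [Sigma.mk.injEq, heq_eq_eq]
    omega
  · intro i h
    simp only [mem_coe, mem_filter, mem_Icc] at h
    have hdiv := Nat.mod_add_div' (i - 1) k
    simp only [Nat.add_sub_cancel]
    omega

lemma desB_eq_ite_add_desA {π : ℤ → ℤ} (h0 : π 0 = 0) (n k : ℕ) :
    desB n k π = (if π k < 0 then 1 else 0) + desA n k π := by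
  have hrange : range (n - k + 1) = insert 0 (Icc 1 (n - k)) := by
    ext; simp only [mem_range, mem_insert, mem_Icc]; omega
  rw [desB, desA, hrange, filter_insert]
  simp only [Nat.cast_zero, zero_add, h0, gt_iff_lt]
  split_ifs <;> simp [add_comm]

lemma bval_zero {n : ℕ} (σ : Equiv.Perm (Fin n)) (ε : Fin n → Bool) : bval n σ ε 0 = 0 := by
  simp [bval]

lemma bval_ne_zero {n : ℕ} (σ : Equiv.Perm (Fin n)) (ε : Fin n → Bool) {p : ℤ}
    (h1 : 1 ≤ p) (h2 : p ≤ n) : bval n σ ε p ≠ 0 := by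
  have hp : 1 ≤ p.natAbs ∧ p.natAbs ≤ n := by omega
  simp only [bval, dif_pos hp, Int.sign_eq_one_of_pos (by omega : 0 < p), one_mul]
  split <;> omega

lemma stdSub_zero (n k r : ℕ) (π : ℤ → ℤ) : stdSub n k r π 0 = 0 := by
  simp [stdSub]

lemma stdSub_one_neg_iff (n k r : ℕ) (π : ℤ → ℤ) : stdSub n k r π 1 < 0 ↔ π r < 0 := by
  have hL : (1 : ℤ) ≤ subLen n k r := by exact_mod_cast Nat.le_add_left 1 _
  have sign_mul_succ_neg_iff (a : ℤ) (c : ℕ) : a.sign * (1 + c) < 0 ↔ a < 0 := by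
    refine Iff.trans ?_ Int.sign_neg_iff
    rcases a.sign_trichotomy with h | h | h <;> rw [h] <;> omega
  rw [stdSub, if_pos ⟨le_rfl, hL⟩, sub_self, zero_mul, add_zero, sign_mul_succ_neg_iff]

lemma stdSub_lt_stdSub_iff {π : ℤ → ℤ} {n k r m m' : ℕ} (hm : m ∈ Icc 1 (subLen n k r))
    (hm' : m' ∈ Icc 1 (subLen n k r)) (h : π (r + ((m : ℤ) - 1) * k) ≠ 0)
    (h' : π (r + ((m' : ℤ) - 1) * k) ≠ 0) :
    stdSub n k r π m < stdSub n k r π m' ↔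
      π (r + ((m : ℤ) - 1) * k) < π (r + ((m' : ℤ) - 1) * k) := by
  have hcast : ∀ j ∈ Icc 1 (subLen n k r), 1 ≤ (j : ℤ) ∧ (j : ℤ) ≤ subLen n k r := by
    intro j hj; rw [mem_Icc] at hj; omega
  rw [stdSub, stdSub, if_pos (hcast m hm), if_pos (hcast m' hm')]
  apply sign_mul_lt_sign_mul_iff h h' (by positivity) (by positivity)
  · rw [add_lt_add_iff_left, Nat.cast_lt,
      card_filter_lt_lt_card_filter_lt_iff (g := fun j : ℕ => |π (r + ((j : ℤ) - 1) * k)|) hm]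
  · rw [add_lt_add_iff_left, Nat.cast_lt,
      card_filter_lt_lt_card_filter_lt_iff (g := fun j : ℕ => |π (r + ((j : ℤ) - 1) * k)|) hm']

lemma desA_stdSub {π : ℤ → ℤ} {n k r : ℕ} (hπ : ∀ p : ℤ, 1 ≤ p → p ≤ n → π p ≠ 0)
    (hk : 0 < k) (hr : 1 ≤ r) :
    desA (subLen n k r) 1 (stdSub n k r π) =
      #{m ∈ Icc 1 ((n - r) / k) | π ↑(r + (m - 1) * k) > π (↑(r + (m - 1) * k) + k)} := by
  rw [desA, subLen, Nat.add_sub_cancel]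
  refine congrArg card (filter_congr fun m hm => ?_)
  obtain ⟨hm1, hm2⟩ := mem_Icc.1 hm
  have hmk := (Nat.le_div_iff_mul_le hk).1 hm2
  have hsub := Nat.sub_one_mul m k
  have hkm : k ≤ m * k := Nat.le_mul_of_pos_left k hm1
  have hmem : m ∈ Icc 1 (subLen n k r) := by simp only [subLen, mem_Icc]; omega
  have hmem' : m + 1 ∈ Icc 1 (subLen n k r) := by simp only [subLen, mem_Icc]; omega
  have hcur : π ↑(r + (m - 1) * k) ≠ 0 :=
    hπ _ (by exact_mod_cast (by omega : 1 ≤ r + (m - 1) * k))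
      (by exact_mod_cast (by omega : r + (m - 1) * k ≤ n))
  have hnext : π (↑(r + (m - 1) * k) + k) ≠ 0 :=
    hπ _ (by omega) (by exact_mod_cast (by omega : r + (m - 1) * k + k ≤ n))
  have hpos : ((r + (m - 1) * k : ℕ) : ℤ) = r + ((m : ℤ) - 1) * k := by
    push_cast [Nat.cast_sub hm1]; ring
  have hpos' : ((r + (m - 1) * k : ℕ) : ℤ) + k = r + (((m + 1 : ℕ) : ℤ) - 1) * k := by
    rw [hpos]; push_cast; ring
  rw [hpos'] at hnext ⊢
  rw [hpos] at hcur ⊢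
  rw [Nat.cast_one, ← Nat.cast_succ]
  exact stdSub_lt_stdSub_iff hmem' hmem hnext hcur

lemma desA_eq_sum_desA_stdSub {π : ℤ → ℤ} {n k : ℕ} (hπ : ∀ p : ℤ, 1 ≤ p → p ≤ n → π p ≠ 0)
    (hk : 0 < k) :
    desA n k π = ∑ r ∈ Icc 1 k, desA (subLen n k r) 1 (stdSub n k r π) := by
  rw [desA, card_filter_Icc_eq_sum_residues _ hk]
  exact sum_congr rfl fun r hr => (desA_stdSub hπ hk (mem_Icc.1 hr).1).symm

theorem stmt18_general (n k : ℕ) (hk : 1 ≤ k)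
    (σ : Equiv.Perm (Fin n)) (ε : Fin n → Bool) :
    desB n k (bval n σ ε) =
      desB (subLen n k k) 1 (stdSub n k k (bval n σ ε)) +
        ∑ i ∈ Finset.Icc 1 (k - 1),
          desA (subLen n k i) 1 (stdSub n k i (bval n σ ε)) := by
  obtain ⟨j, rfl⟩ := Nat.exists_eq_add_of_le' hk
  rw [desB_eq_ite_add_desA (bval_zero σ ε), desB_eq_ite_add_desA (stdSub_zero _ _ _ _),
    desA_eq_sum_desA_stdSub (fun _ => bval_ne_zero σ ε) hk, Nat.add_sub_cancel,
    sum_Icc_succ_top (by omega)]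
  simp only [Nat.cast_one, stdSub_one_neg_iff]
  ring

/-- decomposition of the width-`k` type-B descent number along the
standardized interleaved subsequences:
`des_k^B(π) = des^B(π_k) + Σ_{i=1}^{k-1} des^A(π_i)`. -/
theorem stmt18 (n k : ℕ) (hk : 1 ≤ k) (hkn : k ≤ n)
    (σ : Equiv.Perm (Fin n)) (ε : Fin n → Bool) :
    desB n k (bval n σ ε) =
      desB (subLen n k k) 1 (stdSub n k k (bval n σ ε)) +
        ∑ i ∈ Finset.Icc 1 (k - 1),
          desA (subLen n k i) 1 (stdSub n k i (bval n σ ε)) :=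
  stmt18_general n k hk σ ε
end
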